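/- arXiv:1604.08910 — 8 statements merged into one kernel-verified Lean document; each statement's English description precedes it below -/
import Mathlib

section
/- Let n ≥ 1 and let G be a real n×n matrix with zero diagonal. The public-good provision game with parameters (G, q) has exactly one Nash equilibrium for every q ∈ ℝⁿ if and only if I + G is a P-matrix. -/
/-!
Since `G` has zero diagonal, `((1 + G) x)ᵢ = xᵢ + ∑_{j ≠ i} Gᵢⱼ xⱼ`, so the Nash equilibria of
`(G, q)` are exactly the solutions of the linear complementarity problem
`x ≥ 0, w = (1 + G) x - q ≥ 0, xᵢ wᵢ = 0`, and the theorem is the Samelson–Thrall–Wesler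
characterisation of P-matrices by unique solvability of all these problems.

Its core is the Gale–Nikaido theorem: `M` is a P-matrix iff `zᵢ (M z)ᵢ ≤ 0` for all `i` forces
`z = 0`. A principal submatrix `A` with `det A ≤ 0` yields such a `z ≠ 0` from a kernel vector of
`A + t • 1`, where `t ≥ 0` is a root of `det (A + t • 1)`. Conversely, restricting such a `z ≠ 0` to
its support gives `det (A + D) = 0` for a principal submatrix `A` and a nonnegative diagonal `D`,
whereas for a P-matrix `det (A + D)` is a sum of principal minors of `A` with nonnegative
coefficients. The difference of two solutions of one problem is such a `z`, so solutions are
unique; conversely, from such a `z ≠ 0` the vectors `z⁺` and `z⁻` solve the problem with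
`q = min (M z⁺) (M z⁻)`.

Existence for a P-matrix is by induction on the size: fixing the first coordinate `s ≥ 0`, the
remaining coordinates solve a smaller problem, whose solution is Lipschitz in the data by a
compactness argument, and the intermediate value theorem finds `s` satisfying the first
complementarity condition. The first slack becomes nonnegative for large `s` because it grows
like `γ s` with `γ > 0`: otherwise both `0` and a vector with first coordinate `1` would solve the
problem with `q = (γ, 0, …, 0)`.
-/

open Matrix Finset

/-- Nash equilibrium of the public-good provision game with parameters `(G, q)`. -/
def NashEq {n : ℕ} (G : Matrix (Fin n) (Fin n) ℝ) (q x : Fin n → ℝ) : Prop :=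
  ∀ i, x i = max 0 (q i - ∑ j ∈ Finset.univ.erase i, G i j * x j)

/-- `M` is a P-matrix: every principal submatrix has strictly positive determinant. -/
def IsPMatrix {n : ℕ} (M : Matrix (Fin n) (Fin n) ℝ) : Prop :=
  ∀ s : Finset (Fin n), s.Nonempty →
    0 < (M.submatrix (Subtype.val : {i // i ∈ s} → Fin n) Subtype.val).det

universe u

open Filter

theorem Polynomial.Monic.exists_nonneg_isRoot {p : Polynomial ℝ} (hp : p.Monic)
    (hdeg : 0 < p.natDegree) (h₀ : p.eval 0 ≤ 0) : ∃ t, 0 ≤ t ∧ p.IsRoot t := by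
  have htend : Tendsto p.eval atTop atTop :=
    p.tendsto_atTop_of_leadingCoeff_nonneg (natDegree_pos_iff_degree_pos.mp hdeg)
      (by rw [hp.leadingCoeff]; exact zero_le_one)
  obtain ⟨t₁, ht₁, ht₁_nonneg⟩ :=
    ((htend.eventually_gt_atTop 0).and (eventually_ge_atTop 0)).exists
  obtain ⟨t, ht, hroot⟩ := intermediate_value_Icc ht₁_nonneg p.continuous.continuousOn
    ⟨h₀, ht₁.le⟩
  exact ⟨t, ht.1, hroot⟩

theorem eq_max_zero_iff {a b : ℝ} : a = max 0 b ↔ 0 ≤ a ∧ 0 ≤ a - b ∧ a * (a - b) = 0 := by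
  refine ⟨?_, fun ⟨ha, hab, habz⟩ => ?_⟩
  · rintro rfl
    rcases le_total b 0 with h | h <;> simp [h]
  · rcases mul_eq_zero.mp habz with h | h
    · rw [h, max_eq_left (by linarith)]
    · rw [max_eq_right (by linarith)]; linarith

theorem abs_dotProduct_le {ι : Type*} [Fintype ι] (r v : ι → ℝ) :
    |r ⬝ᵥ v| ≤ (∑ j, |r j|) * ‖v‖ := by
  rw [dotProduct, Finset.sum_mul]
  refine (Finset.abs_sum_le_sum_abs _ _).trans (Finset.sum_le_sum fun j _ => ?_)
  rw [abs_mul]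
  exact mul_le_mul_of_nonneg_left (norm_le_pi_norm v j) (abs_nonneg _)

namespace Matrix

theorem submatrix_mulVec_comp_of_support_subset {R ι κ μ : Type*} [Fintype ι] [Fintype κ]
    [NonUnitalNonAssocSemiring R] (M : Matrix μ ι R) (g : κ → μ) (f : κ ↪ ι) {z : ι → R}
    (hz : Function.support z ⊆ Set.range f) : M.submatrix g f *ᵥ (z ∘ f) = (M *ᵥ z) ∘ g := by
  funext i
  simp only [mulVec, dotProduct, submatrix_apply, Function.comp_apply]
  rw [← Finset.sum_map Finset.univ f (fun j => M (g i) j * z j)]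
  refine Finset.sum_subset (Finset.subset_univ _) fun j _ hj => ?_
  have hzj : z j = 0 := Function.notMem_support.mp fun h => hj (by obtain ⟨k, rfl⟩ := hz h; simp)
  rw [hzj, mul_zero]

theorem mulVec_cons_apply {R m : Type*} [NonUnitalNonAssocSemiring R] {n : ℕ}
    (M : Matrix m (Fin (n + 1)) R) (s : R) (x : Fin n → R) (i : m) :
    (M *ᵥ Fin.cons s x) i = M i 0 * s + Fin.tail (M i) ⬝ᵥ x := by
  simp [mulVec, dotProduct, Fin.sum_univ_succ, Fin.tail]

variable {R : Type*} [CommRing R] {κ : Type*} [Fintype κ] [DecidableEq κ]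

theorem det_updateCol_single_one (C : Matrix κ κ R) (b : κ) :
    (C.updateCol b (Pi.single b 1)).det
      = (C.submatrix (Subtype.val : {i // i ≠ b} → κ) (↑)).det := by
  set D := C.updateCol b (Pi.single b 1)
  let e := Equiv.sumCompl (fun i : κ => i = b)
  rw [← det_submatrix_equiv_self e D, ← fromBlocks_toBlocks (D.submatrix e e)]
  have h₂₁ : (D.submatrix e e).toBlocks₂₁ = 0 := by
    ext i j
    simp [D, e, toBlocks₂₁, updateCol_apply, j.2, Pi.single_apply, i.2]
  have h₁₁ : (D.submatrix e e).toBlocks₁₁.det = 1 := by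
    have : Unique {i : κ // i = b} := ⟨⟨⟨b, rfl⟩⟩, fun x => Subtype.ext x.2⟩
    rw [det_unique]
    simp [D, e, toBlocks₁₁, updateCol_apply, (default : {i : κ // i = b}).2]
  have h₂₂ : (D.submatrix e e).toBlocks₂₂ = C.submatrix (↑) (↑) := by
    ext i j
    simp [D, e, toBlocks₂₂, updateCol_apply, j.2]
  rw [h₂₁, det_fromBlocks_zero₂₁, h₁₁, h₂₂, one_mul]

theorem det_add_diagonal_single (C : Matrix κ κ R) (b : κ) (t : R) :
    (C + diagonal (Pi.single b t)).det
      = C.det + t * (C.submatrix (Subtype.val : {i // i ≠ b} → κ) (↑)).det := by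
  have hcol : C + diagonal (Pi.single b t)
      = C.updateCol b ((fun i => C i b) + t • Pi.single b 1) := by
    ext i j
    grind [updateCol_apply, diagonal_apply, Matrix.add_apply, Pi.add_apply, Pi.smul_apply,
      smul_eq_mul]
  rw [hcol, det_updateCol_add, updateCol_eq_self, det_updateCol_smul, det_updateCol_single_one]

end Matrix

section PMatrix

variable {ι : Type u}

/-- `IsPMatrix` over any index type; principal submatrices are indexed by embeddings, so that a
principal submatrix of a principal submatrix is again one. -/
def HasPosPrincipalMinors (M : Matrix ι ι ℝ) : Prop :=
  ∀ (κ : Type u) [Fintype κ] [DecidableEq κ] (f : κ ↪ ι), 0 < (M.submatrix f f).det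

theorem isPMatrix_iff_hasPosPrincipalMinors {n : ℕ} {M : Matrix (Fin n) (Fin n) ℝ} :
    IsPMatrix M ↔ HasPosPrincipalMinors M := by
  refine ⟨fun hM κ _ _ f => ?_, fun hM s _ => hM _ (Function.Embedding.subtype _)⟩
  rcases isEmpty_or_nonempty κ with hκ | ⟨⟨k⟩⟩
  · rw [det_isEmpty]; exact one_pos
  let e : κ ≃ {i // i ∈ Finset.univ.map f} :=
    (Equiv.ofInjective f f.injective).trans (Equiv.subtypeEquivRight (by simp))
  have hdet := hM _ ⟨f k, Finset.mem_map_of_mem f (Finset.mem_univ k)⟩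
  rwa [← det_submatrix_equiv_self e] at hdet

namespace HasPosPrincipalMinors

variable {M : Matrix ι ι ℝ} (hM : HasPosPrincipalMinors M)
include hM

theorem det_pos [Fintype ι] [DecidableEq ι] : 0 < M.det :=
  hM ι (Function.Embedding.refl ι)

theorem submatrix {κ : Type u} [Fintype κ] [DecidableEq κ] (f : κ ↪ ι) :
    HasPosPrincipalMinors (M.submatrix f f) := fun _ _ _ g =>
  hM _ (g.trans f)

theorem add_diagonal_single [DecidableEq ι] (a : ι) {t : ℝ} (ht : 0 ≤ t) :
    HasPosPrincipalMinors (M + diagonal (Pi.single a t)) := by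
  intro κ _ _ f
  rw [show (M + diagonal (Pi.single a t)).submatrix f f
      = M.submatrix f f + (diagonal (Pi.single a t)).submatrix f f from rfl,
    submatrix_diagonal_embedding]
  by_cases ha : a ∈ Set.range f
  · obtain ⟨b, rfl⟩ := ha
    have hsingle : Pi.single (f b) t ∘ f = Pi.single b t := by
      funext k; simp [Pi.single_apply, f.injective.eq_iff]
    rw [hsingle, det_add_diagonal_single]
    have hminor : 0 < ((M.submatrix f f).submatrix (Subtype.val : {i // i ≠ b} → κ) (↑)).det :=
      hM _ ((Function.Embedding.subtype _).trans f)
    exact add_pos_of_pos_of_nonneg (hM κ f) (mul_nonneg ht hminor.le)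
  · have hzero : Pi.single a t ∘ f = 0 := by
      funext k; exact Pi.single_eq_of_ne (fun h => ha ⟨k, h⟩) _
    simpa [hzero] using hM κ f

theorem add_diagonal [Fintype ι] [DecidableEq ι] {d : ι → ℝ} (hd : 0 ≤ d) :
    HasPosPrincipalMinors (M + diagonal d) := by
  suffices ∀ s : Finset ι, HasPosPrincipalMinors (M + diagonal (∑ i ∈ s, Pi.single i (d i))) by
    simpa [Finset.univ_sum_single] using this Finset.univ
  intro s
  induction s using Finset.induction_on with
  | empty => simpa using hM
  | insert a s ha ih =>
    rw [Finset.sum_insert ha, add_comm (Pi.single a (d a) : ι → ℝ),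
      show ∀ x y : ι → ℝ, diagonal (x + y) = diagonal x + diagonal y from
        fun x y => (diagonal_add x y).symm, ← add_assoc]
    exact ih.add_diagonal_single a (hd a)

end HasPosPrincipalMinors

end PMatrix

section GaleNikaido

variable {ι : Type u} [Fintype ι] [DecidableEq ι] {M : Matrix ι ι ℝ}

theorem HasPosPrincipalMinors.eq_zero_of_mul_mulVec_nonpos (hM : HasPosPrincipalMinors M)
    {z : ι → ℝ} (hz : ∀ i, z i * (M *ᵥ z) i ≤ 0) : z = 0 := by
  by_contra hne
  obtain ⟨i₀, hi₀⟩ := Function.ne_iff.mp hne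
  let f := Function.Embedding.subtype (fun i => z i ≠ 0)
  let v : {i // z i ≠ 0} → ℝ := z ∘ f
  let d : {i // z i ≠ 0} → ℝ := fun i => -(M *ᵥ z) i / z i
  have hAv : M.submatrix f f *ᵥ v = (M *ᵥ z) ∘ f :=
    submatrix_mulVec_comp_of_support_subset M f f fun j hj => ⟨⟨j, hj⟩, rfl⟩
  have hd : 0 ≤ d := fun i => by
    have hzi := hz i
    rcases (i.2 : z i ≠ 0).lt_or_gt with h | h
    · exact div_nonneg_of_nonpos (by nlinarith) h.le
    · exact div_nonneg (by nlinarith) h.le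
  have hker : (M.submatrix f f + diagonal d) *ᵥ v = 0 := by
    rw [add_mulVec, hAv]
    funext i
    simp [mulVec_diagonal, d, v, f, div_mul_cancel₀ _ i.2]
  have hv : v ≠ 0 := Function.ne_iff.mpr ⟨⟨i₀, hi₀⟩, hi₀⟩
  exact ((hM.submatrix f).add_diagonal hd).det_pos.ne'
    (exists_mulVec_eq_zero_iff.mp ⟨v, hv, hker⟩)

theorem exists_ne_zero_mul_mulVec_nonpos_of_not_hasPosPrincipalMinors
    (hM : ¬ HasPosPrincipalMinors M) : ∃ z ≠ 0, ∀ i, z i * (M *ᵥ z) i ≤ 0 := by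
  simp only [HasPosPrincipalMinors, not_forall, not_lt] at hM
  obtain ⟨κ, _, _, f, hdet⟩ := hM
  set A := M.submatrix f f
  have hκ : Nonempty κ := by
    rcases isEmpty_or_nonempty κ with h | h
    · rw [det_isEmpty] at hdet
      exact absurd hdet (not_le.mpr one_pos)
    · exact h
  have hcharpoly : ∀ t, (-A).charpoly.eval t = (scalar κ t + A).det := fun t => by
    rw [eval_charpoly, sub_neg_eq_add]
  obtain ⟨t, ht, hroot⟩ := (charpoly_monic (-A)).exists_nonneg_isRoot
    (by simp [Fintype.card_pos]) (by rw [hcharpoly]; simpa using hdet)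
  rw [Polynomial.IsRoot, hcharpoly] at hroot
  obtain ⟨v, hv, hker⟩ := exists_mulVec_eq_zero_iff.mpr hroot
  have hAv : A *ᵥ v = -(t • v) := by
    rw [add_mulVec, show scalar κ t *ᵥ v = t • v by ext; simp [mulVec_diagonal]] at hker
    exact eq_neg_of_add_eq_zero_right hker
  set z := Function.extend f v (0 : ι → ℝ)
  have hzf : z ∘ f = v := funext (f.injective.extend_apply v 0)
  have hsupp : Function.support z ⊆ Set.range f := fun j hj => by
    by_contra h
    exact hj (Function.extend_apply' v (0 : ι → ℝ) j h)
  refine ⟨z, fun h => hv (by rw [← hzf, h]; rfl), fun i => ?_⟩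
  by_cases hi : i ∈ Set.range f
  · obtain ⟨k, rfl⟩ := hi
    have hMz := congrFun (submatrix_mulVec_comp_of_support_subset M f f hsupp) k
    rw [Function.comp_apply, hzf, hAv] at hMz
    rw [← hMz, show z (f k) = v k from congrFun hzf k, Pi.neg_apply, Pi.smul_apply, smul_eq_mul]
    nlinarith [mul_self_nonneg (v k)]
  · rw [show z i = 0 from Function.extend_apply' v (0 : ι → ℝ) i hi, zero_mul]

theorem HasPosPrincipalMinors.exists_pos_mul_norm_sq_le [Nonempty ι]
    (hM : HasPosPrincipalMinors M) :
    ∃ c > 0, ∀ z : ι → ℝ, ∃ i, c * ‖z‖ ^ 2 ≤ z i * (M *ᵥ z) i := by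
  let φ : (ι → ℝ) → ℝ := fun z =>
    Finset.univ.sup' Finset.univ_nonempty fun i => z i * (M *ᵥ z) i
  have hφ : Continuous φ := Continuous.finset_sup'_apply _ fun i _ => by fun_prop
  obtain ⟨u, hu, hmin⟩ := (isCompact_sphere (0 : ι → ℝ) 1).exists_isMinOn
    (NormedSpace.sphere_nonempty.mpr zero_le_one) hφ.continuousOn
  have hc : 0 < φ u := by
    by_contra hc
    have hu0 := hM.eq_zero_of_mul_mulVec_nonpos fun i =>
      (Finset.le_sup' (fun i => u i * (M *ᵥ u) i) (Finset.mem_univ i)).trans (not_lt.mp hc)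
    simp [hu0] at hu
  refine ⟨φ u, hc, fun z => ?_⟩
  rcases eq_or_ne z 0 with rfl | hz
  · exact ⟨Classical.arbitrary ι, by simp⟩
  have hr : 0 < ‖z‖ := norm_pos_iff.mpr hz
  obtain ⟨i, -, hi⟩ := Finset.exists_mem_eq_sup' Finset.univ_nonempty
    fun i => (‖z‖⁻¹ • z) i * (M *ᵥ (‖z‖⁻¹ • z)) i
  have hle : φ u ≤ φ (‖z‖⁻¹ • z) := hmin (by simp [norm_smul, hr.ne'])
  refine ⟨i, ?_⟩
  have hscale : (‖z‖⁻¹ • z) i * (M *ᵥ (‖z‖⁻¹ • z)) i = (z i * (M *ᵥ z) i) / ‖z‖ ^ 2 := by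
    simp only [mulVec_smul, Pi.smul_apply, smul_eq_mul]
    field_simp
  rw [← le_div_iff₀ (by positivity), ← hscale, ← hi]
  exact hle

end GaleNikaido

section LCP

variable {ι : Type u} [Fintype ι] {M : Matrix ι ι ℝ}

def IsLCPSolution (M : Matrix ι ι ℝ) (q x : ι → ℝ) : Prop :=
  ∀ i, 0 ≤ x i ∧ 0 ≤ (M *ᵥ x - q) i ∧ x i * (M *ᵥ x - q) i = 0

namespace IsLCPSolution

variable {q q' x y : ι → ℝ}

theorem mul_mulVec_sub_le (hx : IsLCPSolution M q x) (hy : IsLCPSolution M q' y) (i : ι) :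
    (x - y) i * (M *ᵥ (x - y)) i ≤ (x - y) i * (q - q') i := by
  obtain ⟨hx₀, hxw₀, hxw⟩ := hx i
  obtain ⟨hy₀, hyw₀, hyw⟩ := hy i
  simp only [Pi.sub_apply, mulVec_sub] at *
  -- `(x - y)ᵢ ((M x - q) - (M y - q'))ᵢ = -(xᵢ (M y - q')ᵢ + yᵢ (M x - q)ᵢ) ≤ 0`
  nlinarith [mul_nonneg hx₀ hyw₀, mul_nonneg hy₀ hxw₀]

theorem eq [DecidableEq ι] (hM : HasPosPrincipalMinors M) (hx : IsLCPSolution M q x)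
    (hy : IsLCPSolution M q y) : x = y :=
  sub_eq_zero.mp <| hM.eq_zero_of_mul_mulVec_nonpos fun i => by
    simpa using hx.mul_mulVec_sub_le hy i

theorem smul (hx : IsLCPSolution M q x) {t : ℝ} (ht : 0 ≤ t) :
    IsLCPSolution M (t • q) (t • x) := fun i => by
  obtain ⟨hx₀, hw₀, hxw⟩ := hx i
  simp only [mulVec_smul, ← smul_sub, Pi.smul_apply, smul_eq_mul]
  exact ⟨mul_nonneg ht hx₀, mul_nonneg ht hw₀, by rw [mul_mul_mul_comm, hxw, mul_zero]⟩

end IsLCPSolution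

theorem HasPosPrincipalMinors.exists_dist_le_of_isLCPSolution [DecidableEq ι]
    (hM : HasPosPrincipalMinors M) :
    ∃ K : ℝ, ∀ ⦃q q' x y : ι → ℝ⦄, IsLCPSolution M q x → IsLCPSolution M q' y →
      dist x y ≤ K * dist q q' := by
  rcases isEmpty_or_nonempty ι with hι | hι
  · exact ⟨0, fun q q' x y _ _ => by simp [Subsingleton.elim x y]⟩
  obtain ⟨c, hc, hcz⟩ := hM.exists_pos_mul_norm_sq_le
  refine ⟨c⁻¹, fun q q' x y hx hy => ?_⟩
  obtain ⟨i, hi⟩ := hcz (x - y)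
  have hbound : c * ‖x - y‖ ^ 2 ≤ ‖x - y‖ * ‖q - q'‖ := calc
    c * ‖x - y‖ ^ 2 ≤ (x - y) i * (M *ᵥ (x - y)) i := hi
    _ ≤ (x - y) i * (q - q') i := hx.mul_mulVec_sub_le hy i
    _ ≤ ‖(x - y) i‖ * ‖(q - q') i‖ := by rw [← norm_mul]; exact Real.le_norm_self _
    _ ≤ ‖x - y‖ * ‖q - q'‖ := by gcongr <;> exact norm_le_pi_norm _ i
  rw [dist_eq_norm, dist_eq_norm, ← div_eq_inv_mul, le_div_iff₀ hc]
  rcases (norm_nonneg (x - y)).eq_or_lt with h | h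
  · rw [← h, zero_mul]; exact norm_nonneg _
  · nlinarith

theorem isLCPSolution_posPart {z : ι → ℝ} (hz : ∀ i, z i * (M *ᵥ z) i ≤ 0) :
    IsLCPSolution M ((M *ᵥ z⁺) ⊓ (M *ᵥ z⁻)) z⁺ := fun i => by
  refine ⟨posPart_nonneg _, sub_nonneg.mpr inf_le_left, ?_⟩
  rcases le_or_gt (z i) 0 with hzi | hzi
  · rw [Pi.posPart_apply, posPart_eq_zero.mpr hzi, zero_mul]
  · have hMz : (M *ᵥ z) i ≤ 0 := nonpos_of_mul_nonpos_right (hz i) hzi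
    rw [← posPart_sub_negPart z, mulVec_sub, Pi.sub_apply, sub_nonpos] at hMz
    rw [Pi.sub_apply, Pi.inf_apply, inf_eq_left.mpr hMz, sub_self, mul_zero]

theorem exists_isLCPSolution_ne_of_not_hasPosPrincipalMinors [DecidableEq ι]
    (hM : ¬ HasPosPrincipalMinors M) :
    ∃ q x y, IsLCPSolution M q x ∧ IsLCPSolution M q y ∧ x ≠ y := by
  obtain ⟨z, hz, hrev⟩ := exists_ne_zero_mul_mulVec_nonpos_of_not_hasPosPrincipalMinors hM
  have hrev' : ∀ i, (-z) i * (M *ᵥ -z) i ≤ 0 := fun i => by simpa [mulVec_neg] using hrev i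
  refine ⟨(M *ᵥ z⁺) ⊓ (M *ᵥ z⁻), z⁺, z⁻, isLCPSolution_posPart hrev, ?_, fun h => hz ?_⟩
  · simpa [inf_comm] using isLCPSolution_posPart hrev'
  · rw [← posPart_sub_negPart z, h, sub_self]

end LCP

section Existence

variable {n : ℕ} (M : Matrix (Fin (n + 1)) (Fin (n + 1)) ℝ)

theorem isLCPSolution_cons {q : Fin (n + 1) → ℝ} {x : Fin n → ℝ} {s : ℝ}
    (hx : IsLCPSolution (M.submatrix Fin.succ Fin.succ)
      (Fin.tail q - s • Fin.tail fun i => M i 0) x)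
    (hs : 0 ≤ s) (hw : 0 ≤ M 0 0 * s + Fin.tail (M 0) ⬝ᵥ x - q 0)
    (hsw : s * (M 0 0 * s + Fin.tail (M 0) ⬝ᵥ x - q 0) = 0) :
    IsLCPSolution M q (Fin.cons s x) := by
  intro i
  induction i using Fin.cases with
  | zero =>
    rw [Pi.sub_apply, mulVec_cons_apply, Fin.cons_zero]
    exact ⟨hs, hw, hsw⟩
  | succ k =>
    have hwk : (M *ᵥ Fin.cons s x - q) k.succ
        = (M.submatrix Fin.succ Fin.succ *ᵥ x - (Fin.tail q - s • Fin.tail fun i => M i 0)) k := by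
      rw [Pi.sub_apply, mulVec_cons_apply]
      change _ = Fin.tail (M k.succ) ⬝ᵥ x - (q k.succ - s * M k.succ 0)
      ring
    rw [Fin.cons_succ, hwk]
    exact hx k

variable {M}

theorem HasPosPrincipalMinors.exists_slack_nonneg (hM : HasPosPrincipalMinors M)
    {S : (Fin n → ℝ) → Fin n → ℝ}
    (hS : ∀ p, IsLCPSolution (M.submatrix Fin.succ Fin.succ) p (S p))
    {K : ℝ} (hK : ∀ ⦃p p' x y⦄, IsLCPSolution (M.submatrix Fin.succ Fin.succ) p x →
      IsLCPSolution (M.submatrix Fin.succ Fin.succ) p' y → dist x y ≤ K * dist p p')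
    (q : Fin (n + 1) → ℝ) :
    ∃ s, 0 ≤ s ∧
      0 ≤ M 0 0 * s + Fin.tail (M 0) ⬝ᵥ S (Fin.tail q - s • Fin.tail fun i => M i 0) - q 0 := by
  set m := Fin.tail fun i => M i 0
  set r := Fin.tail (M 0)
  set x₀ := S (-m)
  have hγ : 0 < M 0 0 + r ⬝ᵥ x₀ := by
    by_contra! hγ
    have h₁ : IsLCPSolution M (Fin.cons (M 0 0 + r ⬝ᵥ x₀) 0) (Fin.cons 1 x₀) :=
      isLCPSolution_cons M (by simpa using hS (-m)) zero_le_one (by simp [r]) (by simp [r])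
    have h₀ : IsLCPSolution M (Fin.cons (M 0 0 + r ⬝ᵥ x₀) 0) 0 := fun i => by
      refine ⟨le_rfl, ?_, zero_mul _⟩
      induction i using Fin.cases
      · simp; linarith
      · simp
    simpa using congrFun (h₁.eq hM h₀) 0
  -- the slack at `s` is at least `s * (M 0 0 + r ⬝ᵥ x₀) - C`
  set C := (∑ j, |r j|) * (K * ‖Fin.tail q‖) + q 0
  set s := |C| / (M 0 0 + r ⬝ᵥ x₀)
  have hs : 0 ≤ s := by positivity
  have hsγ : s * (M 0 0 + r ⬝ᵥ x₀) = |C| := div_mul_cancel₀ _ hγ.ne'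
  set x := S (Fin.tail q - s • m)
  have hdist : ‖x - s • x₀‖ ≤ K * ‖Fin.tail q‖ := by
    simpa [dist_eq_norm] using hK (hS (Fin.tail q - s • m)) ((hS (-m)).smul hs)
  have hdot := abs_dotProduct_le r (x - s • x₀)
  have hsplit : r ⬝ᵥ x = s * (r ⬝ᵥ x₀) + r ⬝ᵥ (x - s • x₀) := by
    rw [dotProduct_sub, dotProduct_smul, smul_eq_mul]; ring
  refine ⟨s, hs, show 0 ≤ M 0 0 * s + r ⬝ᵥ x - q 0 from ?_⟩
  have hR : 0 ≤ ∑ j, |r j| := by positivity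
  linarith [le_abs_self C, neg_abs_le (r ⬝ᵥ (x - s • x₀)), mul_le_mul_of_nonneg_left hdist hR]

theorem HasPosPrincipalMinors.exists_isLCPSolution_of_submatrix_succ
    (hM : HasPosPrincipalMinors M)
    (h : ∀ p, ∃ x, IsLCPSolution (M.submatrix Fin.succ Fin.succ) p x) (q : Fin (n + 1) → ℝ) :
    ∃ x, IsLCPSolution M q x := by
  choose S hS using h
  obtain ⟨K, hK⟩ := (hM.submatrix (Fin.succEmb n)).exists_dist_le_of_isLCPSolution
  have hS_cont : Continuous S :=
    (LipschitzWith.of_dist_le' fun p p' => hK (hS p) (hS p')).continuous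
  set w : ℝ → ℝ := fun s =>
    M 0 0 * s + Fin.tail (M 0) ⬝ᵥ S (Fin.tail q - s • Fin.tail fun i => M i 0) - q 0
  have hw : Continuous w := by fun_prop
  obtain ⟨s₁, hs₁, hw₁⟩ := hM.exists_slack_nonneg hS hK q
  obtain ⟨s, hs, hws, hsw⟩ : ∃ s, 0 ≤ s ∧ 0 ≤ w s ∧ s * w s = 0 := by
    by_cases h₀ : 0 ≤ w 0
    · exact ⟨0, le_rfl, h₀, zero_mul _⟩
    · obtain ⟨s, hs, hs₀⟩ :=
        intermediate_value_Icc hs₁ hw.continuousOn ⟨(not_le.mp h₀).le, hw₁⟩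
      exact ⟨s, hs.1, hs₀.ge, by rw [hs₀, mul_zero]⟩
  exact ⟨Fin.cons s (S _), isLCPSolution_cons M (hS _) hs hws hsw⟩

end Existence

theorem HasPosPrincipalMinors.exists_isLCPSolution :
    ∀ {n : ℕ} {M : Matrix (Fin n) (Fin n) ℝ}, HasPosPrincipalMinors M →
      ∀ q, ∃ x, IsLCPSolution M q x
  | 0, _, _, _ => ⟨0, fun i => i.elim0⟩
  | n + 1, _, hM, q => hM.exists_isLCPSolution_of_submatrix_succ
      (fun p => (hM.submatrix (Fin.succEmb n)).exists_isLCPSolution p) q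

theorem forall_existsUnique_isLCPSolution_iff {n : ℕ} {M : Matrix (Fin n) (Fin n) ℝ} :
    (∀ q, ∃! x, IsLCPSolution M q x) ↔ HasPosPrincipalMinors M := by
  refine ⟨fun h => ?_, fun hM q => ?_⟩
  · by_contra hM
    obtain ⟨q, x, y, hx, hy, hxy⟩ := exists_isLCPSolution_ne_of_not_hasPosPrincipalMinors hM
    exact hxy ((h q).unique hx hy)
  · obtain ⟨x, hx⟩ := hM.exists_isLCPSolution q
    exact ⟨x, hx, fun y hy => hy.eq hM hx⟩

theorem nashEq_iff_isLCPSolution {n : ℕ} {G : Matrix (Fin n) (Fin n) ℝ} (hdiag : ∀ i, G i i = 0)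
    {q x : Fin n → ℝ} : NashEq G q x ↔ IsLCPSolution (1 + G) q x := by
  refine forall_congr' fun i => ?_
  have hsum : ∑ j ∈ Finset.univ.erase i, G i j * x j = (G *ᵥ x) i := by
    rw [Finset.sum_erase _ (by simp [hdiag i])]; rfl
  have hslack : ((1 + G) *ᵥ x - q : Fin n → ℝ) i = x i - (q i - (G *ᵥ x) i) := by
    simp [add_mulVec]; ring
  rw [hsum, hslack, eq_max_zero_iff]

theorem unique_nash_iff_P_general (n : ℕ) (G : Matrix (Fin n) (Fin n) ℝ)
    (hdiag : ∀ i, G i i = 0) :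
    (∀ q : Fin n → ℝ, ∃! x : Fin n → ℝ, NashEq G q x) ↔ IsPMatrix (1 + G) := by
  simp only [nashEq_iff_isLCPSolution hdiag, isPMatrix_iff_hasPosPrincipalMinors]
  exact forall_existsUnique_isLCPSolution_iff

theorem unique_nash_iff_P (n : ℕ) (hn : 1 ≤ n) (G : Matrix (Fin n) (Fin n) ℝ)
    (hdiag : ∀ i, G i i = 0) :
    (∀ q : Fin n → ℝ, ∃! x : Fin n → ℝ, NashEq G q x) ↔ IsPMatrix (1 + G) :=
  unique_nash_iff_P_general n G hdiag
end

section
/- Let n ≥ 1 and let G be a real n×n matrix with zero diagonal all of whose entries are nonnegative (a game of strategic substitutes). Then for every q ∈ ℝⁿ the public-good provision game with parameters (G, q) has at least one Nash equilibrium. -/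
/-!
Write `z⁺` for the positive part. If `z + G z⁺ = q`, then `x = z⁺` is an equilibrium, and on the
orthant of sign pattern `σ` the map `z ↦ z + G z⁺` is linear, with matrix `1 + G D_σ`. When all
these matrices are invertible, count mod 2 the patterns `σ` whose linear equation has a solution of
sign pattern `σ`. Along a generic segment of right-hand sides this parity does not change: a
solution enters or leaves its orthant through a wall `zᵢ = 0`, on which the matrices of `σ` and of
`σ` with its `i`-th sign flipped agree, so these crossings come in pairs. For `q < 0` only the
negative orthant contributes because `G ≥ 0`, so the parity is odd and generic `q` have an
equilibrium. Equilibria are bounded by `‖q‖`, so equilibria of the approximations `(t • G, q')`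
with `t → 1`, `q' → q` accumulate at an equilibrium of `(G, q)`.
-/

open Matrix Finset

namespace PublicGoods

open scoped Classical

noncomputable section

section Crossing

variable {φ : ℝ → ℝ} {a b u v : ℝ}

lemma pos_of_affine_of_pos_of_pos (hφ : ∀ s, φ s = a + s * b) {s : ℝ} (hs : s ∈ Set.Icc u v)
    (hu : 0 < φ u) (hv : 0 < φ v) : 0 < φ s := by
  rw [hφ] at *
  rcases le_total 0 b with hb | hb <;> nlinarith [hs.1, hs.2]

lemma exists_root_of_affine_of_neg_of_pos (hφ : ∀ s, φ s = a + s * b) (huv : u < v)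
    (hu : φ u < 0) (hv : 0 < φ v) :
    ∃ r ∈ Set.Ioo u v, (∀ s, φ s = 0 ↔ s = r) ∧ ∀ s, 0 < φ s ↔ r < s := by
  rw [hφ] at hu hv
  have hb : 0 < b := by nlinarith
  have hφr : ∀ s, φ s = b * (s - -a / b) := fun s => by rw [hφ]; field_simp; ring
  refine ⟨-a / b, ⟨?_, ?_⟩, fun s => ?_, fun s => ?_⟩
  · rw [lt_div_iff₀ hb]; linarith
  · rw [div_lt_iff₀ hb]; linarith
  · rw [hφr, mul_eq_zero, sub_eq_zero, or_iff_right hb.ne']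
  · rw [hφr, mul_pos_iff_of_pos_left hb, sub_pos]

lemma exists_root_of_affine_of_pos_of_neg (hφ : ∀ s, φ s = a + s * b) (huv : u < v)
    (hu : 0 < φ u) (hv : φ v < 0) :
    ∃ r ∈ Set.Ioo u v, (∀ s, φ s = 0 ↔ s = r) ∧ ∀ s, 0 < φ s ↔ s < r := by
  rw [hφ] at hu hv
  have hb : b < 0 := by nlinarith
  have hφr (s : ℝ) : φ s = -b * (-a / b - s) := by
    rw [hφ]; field_simp [hb.ne]; ring
  refine ⟨-a / b, ⟨?_, ?_⟩, fun s => ?_, fun s => ?_⟩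
  · rw [lt_div_iff_of_neg hb]; linarith
  · rw [div_lt_iff_of_neg hb]; linarith
  · rw [hφr, mul_eq_zero, sub_eq_zero, or_iff_right (neg_ne_zero.2 hb.ne), eq_comm]
  · rw [hφr, mul_pos_iff_of_pos_left (neg_pos.2 hb), sub_pos]

variable {ι : Type*} (f : ι → ℝ → ℝ)

def IsCrossing (F : Finset ι) (u v : ℝ) (i : ι) : Prop :=
  ∃ s ∈ Set.Ioo u v, f i s = 0 ∧ ∀ j ∈ F, j ≠ i → 0 < f j s

variable {f} {F : Finset ι} {g : ι}

lemma isCrossing_insert_self_iff (hg : g ∉ F) {r : ℝ} (hr : r ∈ Set.Ioo u v)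
    (hzero : ∀ s, f g s = 0 ↔ s = r) :
    IsCrossing f (insert g F) u v g ↔ ∀ j ∈ F, 0 < f j r := by
  refine ⟨fun ⟨s, _, h0, h⟩ j hj => ?_, fun h => ⟨r, hr, (hzero r).2 rfl, fun j hj hjg => ?_⟩⟩
  · rw [← (hzero s).1 h0]
    exact h j (mem_insert_of_mem hj) fun e => hg (e ▸ hj)
  · exact h j ((mem_insert.1 hj).resolve_left hjg)

lemma isCrossing_insert_iff {i : ι} (hg : g ∉ F) (hi : i ∈ F) {u' v' : ℝ}
    (hsub : Set.Ioo u' v' ⊆ Set.Ioo u v) (hpos : ∀ s ∈ Set.Ioo u v, 0 < f g s ↔ s ∈ Set.Ioo u' v') :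
    IsCrossing f (insert g F) u v i ↔ IsCrossing f F u' v' i := by
  simp only [IsCrossing, forall_mem_insert, ne_eq, show g ≠ i from fun h => hg (h ▸ hi),
    not_false_eq_true, true_imp_iff]
  exact ⟨fun ⟨s, hs, h0, hg, h⟩ => ⟨s, (hpos s hs).1 hg, h0, h⟩,
    fun ⟨s, hs, h0, h⟩ => ⟨s, hsub hs, h0, (hpos s (hsub hs)).2 hs, h⟩⟩

variable (f)

theorem crossing_parity (hf : ∀ i, ∃ a b, ∀ s, f i s = a + s * b)
    (hsep : ∀ i j s, f i s = 0 → f j s = 0 → i = j) (F : Finset ι) (huv : u < v)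
    (hu : ∀ i ∈ F, f i u ≠ 0) (hv : ∀ i ∈ F, f i v ≠ 0) :
    ((if ∀ i ∈ F, 0 < f i u then 1 else 0) + (if ∀ i ∈ F, 0 < f i v then 1 else 0) : ZMod 2) =
      ∑ i ∈ F, if IsCrossing f F u v i then 1 else 0 := by
  induction F using Finset.induction_on generalizing u v with
  | empty => simp only [notMem_empty, false_imp_iff, imp_true_iff, if_true, sum_empty]; decide
  | insert g F hg ih =>
    simp only [forall_mem_insert] at hu hv ⊢
    rw [sum_insert hg]
    obtain ⟨a, b, hab⟩ := hf g
    have hF {r : ℝ} (hr : f g r = 0) : ∀ j ∈ F, f j r ≠ 0 := fun j hj hjr =>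
      hg (hsep j g r hjr hr ▸ hj)
    -- `f g` is negative on `(u, v)`, or changes sign once at a root `r`, or is positive; the
    -- crossings of the old members count only where `f g > 0`, and `g` crosses at `r`
    rcases hu.1.lt_or_gt with hgu | hgu <;> rcases hv.1.lt_or_gt with hgv | hgv
    · have hneg (s : ℝ) (hs : s ∈ Set.Ioo u v) : ¬ 0 ≤ f g s := not_le.2 <| neg_pos.1 <|
        pos_of_affine_of_pos_of_pos (φ := fun s => -f g s) (a := -a) (b := -b)
          (fun s => by rw [hab]; ring) (Set.Ioo_subset_Icc_self hs) (neg_pos.2 hgu) (neg_pos.2 hgv)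
      simp only [hgu.not_gt, hgv.not_gt, false_and, if_false]
      rw [if_neg fun ⟨s, hs, h, _⟩ => hneg s hs h.ge, sum_eq_zero fun i hi =>
        if_neg fun ⟨s, hs, _, h⟩ => hneg s hs (h g (mem_insert_self g F) fun e => hg (e ▸ hi)).le]
    · obtain ⟨r, hr, hzero, hpos⟩ := exists_root_of_affine_of_neg_of_pos hab huv hgu hgv
      have hcross {i : ι} (hi : i ∈ F) : IsCrossing f (insert g F) u v i ↔ IsCrossing f F r v i :=
        isCrossing_insert_iff hg hi (Set.Ioo_subset_Ioo_left hr.1.le) fun s hs =>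
          (hpos s).trans ⟨fun h => ⟨h, hs.2⟩, And.left⟩
      simp only [hgu.not_gt, hgv, true_and, false_and, if_false]
      rw [if_congr (isCrossing_insert_self_iff hg hr hzero) rfl rfl,
        sum_congr rfl fun i hi => if_congr (hcross hi) rfl rfl,
        ← ih hr.2 (hF ((hzero r).2 rfl)) hv.2, ← add_assoc, CharTwo.add_self_eq_zero, zero_add]
    · obtain ⟨r, hr, hzero, hpos⟩ := exists_root_of_affine_of_pos_of_neg hab huv hgu hgv
      have hcross {i : ι} (hi : i ∈ F) : IsCrossing f (insert g F) u v i ↔ IsCrossing f F u r i :=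
        isCrossing_insert_iff hg hi (Set.Ioo_subset_Ioo_right hr.2.le) fun s hs =>
          (hpos s).trans ⟨fun h => ⟨hs.1, h⟩, And.right⟩
      simp only [hgu, hgv.not_gt, true_and, false_and, if_false]
      rw [if_congr (isCrossing_insert_self_iff hg hr hzero) rfl rfl,
        sum_congr rfl fun i hi => if_congr (hcross hi) rfl rfl,
        ← ih hr.1 hu.2 (hF ((hzero r).2 rfl)), add_zero, add_left_comm,
        CharTwo.add_self_eq_zero, add_zero]
    · have hpos (s : ℝ) (hs : s ∈ Set.Ioo u v) : 0 < f g s :=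
        pos_of_affine_of_pos_of_pos hab (Set.Ioo_subset_Icc_self hs) hgu hgv
      have hgg : ¬ IsCrossing f (insert g F) u v g := fun ⟨s, hs, h, _⟩ => (hpos s hs).ne' h
      simp only [hgu, hgv, true_and]
      rw [if_neg hgg, zero_add, ih huv hu.2 hv.2]
      exact sum_congr rfl fun i hi => if_congr (isCrossing_insert_iff hg hi subset_rfl
        fun s hs => iff_of_true (hpos s hs) hs).symm rfl rfl

end Crossing

section Parity

variable {m : Type*} [DecidableEq m]

def flipAt (σ : m → Bool) (i : m) : m → Bool := Function.update σ i (!σ i)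

lemma flipAt_apply_of_ne (σ : m → Bool) {i j : m} (h : j ≠ i) : flipAt σ i j = σ j :=
  Function.update_of_ne h _ _

lemma flipAt_flipAt (σ : m → Bool) (i : m) : flipAt (flipAt σ i) i = σ := by
  simp [flipAt]

lemma flipAt_ne (σ : m → Bool) (i : m) : flipAt σ i ≠ σ :=
  fun h => Bool.not_ne_self (σ i) (by simpa [flipAt] using congrFun h i)

def boolSign (b : Bool) : ℝ := if b then 1 else -1

lemma boolSign_ne_zero (b : Bool) : boolSign b ≠ 0 := by
  cases b <;> norm_num [boolSign]

variable [Fintype m] (A : (m → Bool) → Matrix m m ℝ)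

def signedSolutionParity (q : m → ℝ) : ZMod 2 :=
  ∑ σ, if ∀ i, 0 < boolSign (σ i) * ((A σ)⁻¹ *ᵥ q) i then 1 else 0

def signedCoord (q p : m → ℝ) (σ : m → Bool) (i : m) (s : ℝ) : ℝ :=
  boolSign (σ i) * ((A σ)⁻¹ *ᵥ (q + s • (p - q))) i

def IsGenericSegment (q p : m → ℝ) : Prop :=
  ∀ σ i, ((A σ)⁻¹ *ᵥ q) i ≠ 0 ∧ ((A σ)⁻¹ *ᵥ p) i ≠ 0 ∧
    ∀ j (s : ℝ), ((A σ)⁻¹ *ᵥ (q + s • (p - q))) i = 0 →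
      ((A σ)⁻¹ *ᵥ (q + s • (p - q))) j = 0 → i = j

def AgreesOnWalls : Prop :=
  ∀ σ i (z : m → ℝ), z i = 0 → A (flipAt σ i) *ᵥ z = A σ *ᵥ z

variable {A}

lemma mulVec_inv_mulVec {B : Matrix m m ℝ} (hB : IsUnit B) (v : m → ℝ) : B *ᵥ (B⁻¹ *ᵥ v) = v := by
  rw [mulVec_mulVec, mul_nonsing_inv _ ((isUnit_iff_isUnit_det _).1 hB), one_mulVec]

lemma inv_mulVec_flipAt (hA : ∀ σ, IsUnit (A σ)) (hflip : AgreesOnWalls A) {σ : m → Bool} {i : m}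
    {r : m → ℝ} (h : ((A σ)⁻¹ *ᵥ r) i = 0) :
    (A (flipAt σ i))⁻¹ *ᵥ r = (A σ)⁻¹ *ᵥ r := by
  have := (hA (flipAt σ i)).invertible
  exact inv_mulVec_eq_vec (by rw [hflip σ i _ h, mulVec_inv_mulVec (hA σ)])

lemma isCrossing_signedCoord_flipAt (hA : ∀ σ, IsUnit (A σ)) (hflip : AgreesOnWalls A) {q p : m → ℝ}
    {σ : m → Bool} {i : m} (h : IsCrossing (signedCoord A q p σ) univ 0 1 i) :
    IsCrossing (signedCoord A q p (flipAt σ i)) univ 0 1 i := by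
  obtain ⟨s, hs, h0, hpos⟩ := h
  have hz := (mul_eq_zero.1 h0).resolve_left (boolSign_ne_zero _)
  have heq := inv_mulVec_flipAt hA hflip hz
  refine ⟨s, hs, by rw [signedCoord, heq, hz, mul_zero], fun j _ hji => ?_⟩
  rw [signedCoord, heq, flipAt_apply_of_ne σ hji]
  exact hpos j (mem_univ j) hji

lemma signedCoord_affine (q p : m → ℝ) (σ : m → Bool) (i : m) :
    ∃ a b, ∀ s, signedCoord A q p σ i s = a + s * b :=
  ⟨_, _, fun s => by
    rw [signedCoord, mulVec_add, mulVec_smul, Pi.add_apply, Pi.smul_apply, smul_eq_mul, mul_add,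
      mul_left_comm]⟩

theorem signedSolutionParity_eq (hA : ∀ σ, IsUnit (A σ)) (hflip : AgreesOnWalls A) {q p : m → ℝ}
    (hqp : IsGenericSegment A q p) : signedSolutionParity A q = signedSolutionParity A p := by
  have hcross (σ : m → Bool) := crossing_parity (signedCoord A q p σ)
    (signedCoord_affine q p σ) (fun i j s hi hj => (hqp σ i).2.2 j s
      ((mul_eq_zero.1 hi).resolve_left (boolSign_ne_zero _))
      ((mul_eq_zero.1 hj).resolve_left (boolSign_ne_zero _))) univ zero_lt_one
    (fun i _ => by simpa [signedCoord, boolSign_ne_zero] using (hqp σ i).1)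
    (fun i _ => by simpa [signedCoord, boolSign_ne_zero] using (hqp σ i).2.1)
  simp only [signedCoord, mem_univ, true_imp_iff, zero_smul, add_zero, one_smul,
    add_sub_cancel] at hcross
  have hpairs : ∑ σ, ∑ i, (if IsCrossing (signedCoord A q p σ) univ 0 1 i then 1 else 0 : ZMod 2)
      = 0 := by
    rw [← Fintype.sum_prod_type']
    refine sum_involution (fun x _ => (flipAt x.1 x.2, x.2)) (fun x _ => ?_)
      (fun x _ _ h => flipAt_ne x.1 x.2 (congrArg Prod.fst h)) (fun _ _ => mem_univ _)
      (fun x _ => by simp [flipAt_flipAt])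
    rw [if_congr ⟨isCrossing_signedCoord_flipAt hA hflip, fun h => by
      simpa only [flipAt_flipAt] using isCrossing_signedCoord_flipAt hA hflip h⟩ rfl rfl]
    exact CharTwo.add_self_eq_zero _
  rw [← sub_eq_zero, CharTwo.sub_eq_add, signedSolutionParity, signedSolutionParity,
    ← sum_add_distrib, sum_congr rfl fun σ _ => hcross σ, hpairs]

end Parity

section Genericity

variable {m : Type*} [Fintype m]

lemma dense_setOf_dotProduct_ne_zero {w : m → ℝ} (hw : w ≠ 0) : Dense {x | w ⬝ᵥ x ≠ 0} := by
  refine interior_eq_empty_iff_dense_compl.1 (Set.not_nonempty_iff_eq_empty.1 fun h => hw ?_)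
  have hker := (LinearMap.ker (dotProductBilin ℝ ℝ w)).eq_top_of_nonempty_interior' h
  exact dotProduct_self_eq_zero.1 (LinearMap.mem_ker.1 (hker ▸ Submodule.mem_top : w ∈ _))

lemma isOpen_setOf_forall_dotProduct_ne_zero {ι : Type*} [Finite ι] (w : ι → m → ℝ) :
    IsOpen {x | ∀ k, w k ⬝ᵥ x ≠ 0} := by
  rw [Set.ofPred_forall]
  exact isOpen_iInter_of_finite fun k => isOpen_ne_fun (by fun_prop) continuous_const

lemma dense_setOf_forall_dotProduct_ne_zero {ι : Type*} [Finite ι] {w : ι → m → ℝ}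
    (hw : ∀ k, w k ≠ 0) : Dense {x | ∀ k, w k ⬝ᵥ x ≠ 0} := by
  rw [Set.ofPred_forall]
  exact dense_iInter_of_isOpen (fun k => isOpen_ne_fun (by fun_prop) continuous_const)
    fun k => dense_setOf_dotProduct_ne_zero (hw k)

variable [DecidableEq m] {A : (m → Bool) → Matrix m m ℝ}

lemma row_inv_ne_zero {B : Matrix m m ℝ} (hB : IsUnit B) (i : m) : B⁻¹ i ≠ 0 :=
  fun h => (isUnit_iff_isUnit_det _).1 (isUnit_nonsing_inv_iff.2 hB) |>.ne_zero <|
    det_eq_zero_of_row_eq_zero i fun j => congrFun h j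

lemma isOpen_setOf_forall_inv_mulVec_ne_zero (A : (m → Bool) → Matrix m m ℝ) :
    IsOpen {x | ∀ σ i, ((A σ)⁻¹ *ᵥ x) i ≠ 0} := by
  have := isOpen_setOf_forall_dotProduct_ne_zero fun k : (m → Bool) × m => (A k.1)⁻¹ k.2
  simp only [Prod.forall] at this
  exact this

lemma dense_setOf_forall_inv_mulVec_ne_zero (hA : ∀ σ, IsUnit (A σ)) :
    Dense {x | ∀ σ i, ((A σ)⁻¹ *ᵥ x) i ≠ 0} := by
  have := dense_setOf_forall_dotProduct_ne_zero
    (w := fun k : (m → Bool) × m => (A k.1)⁻¹ k.2) fun k => row_inv_ne_zero (hA k.1) k.2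
  simp only [Prod.forall] at this
  exact this

lemma dense_setOf_forall_inv_mulVec_cross_ne_zero (hA : ∀ σ, IsUnit (A σ)) {q : m → ℝ}
    (hq : ∀ σ i, ((A σ)⁻¹ *ᵥ q) i ≠ 0) :
    Dense {p | ∀ σ i j, i ≠ j →
      ((A σ)⁻¹ *ᵥ q) i * ((A σ)⁻¹ *ᵥ p) j - ((A σ)⁻¹ *ᵥ q) j * ((A σ)⁻¹ *ᵥ p) i ≠ 0} := by
  have := dense_setOf_forall_dotProduct_ne_zero
    (w := fun k : {t : (m → Bool) × m × m // t.2.1 ≠ t.2.2} =>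
      ((A k.1.1)⁻¹ *ᵥ q) k.1.2.1 • (A k.1.1)⁻¹ k.1.2.2 -
        ((A k.1.1)⁻¹ *ᵥ q) k.1.2.2 • (A k.1.1)⁻¹ k.1.2.1)
    fun ⟨⟨σ, i, j⟩, hij⟩ h => hq σ i <| by
      have hg := vecMul_injective_of_isUnit (isUnit_nonsing_inv_iff.2 (hA σ))
        (a₁ := ((A σ)⁻¹ *ᵥ q) i • Pi.single j 1 - ((A σ)⁻¹ *ᵥ q) j • Pi.single i 1) (a₂ := 0)
        (by simp only [sub_vecMul, smul_vecMul, single_one_vecMul, zero_vecMul]; exact h)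
      simpa [Pi.single_apply, hij.symm] using congrFun hg j
  simp only [Subtype.forall, Prod.forall, sub_dotProduct, smul_dotProduct, smul_eq_mul] at this
  exact this

lemma isGenericSegment_of_forall_ne_zero {q p : m → ℝ}
    (hq : ∀ σ i, ((A σ)⁻¹ *ᵥ q) i ≠ 0) (hp : ∀ σ i, ((A σ)⁻¹ *ᵥ p) i ≠ 0)
    (hqp : ∀ σ i j, i ≠ j →
      ((A σ)⁻¹ *ᵥ q) i * ((A σ)⁻¹ *ᵥ p) j - ((A σ)⁻¹ *ᵥ q) j * ((A σ)⁻¹ *ᵥ p) i ≠ 0) :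
    IsGenericSegment A q p := by
  refine fun σ i => ⟨hq σ i, hp σ i, fun j s hi hj => by_contra fun hij => hqp σ i j hij ?_⟩
  simp only [mulVec_add, mulVec_smul, mulVec_sub, Pi.add_apply, Pi.smul_apply, Pi.sub_apply,
    smul_eq_mul] at hi hj
  have hs : 1 - s ≠ 0 := sub_ne_zero.2 fun h => hp σ i (by simpa [← h] using hi)
  refine (mul_eq_zero.1 ?_).resolve_left hs
  linear_combination ((A σ)⁻¹ *ᵥ p) j * hi - ((A σ)⁻¹ *ᵥ p) i * hj

lemma exists_isGenericSegment (hA : ∀ σ, IsUnit (A σ)) {q : m → ℝ}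
    (hq : ∀ σ i, ((A σ)⁻¹ *ᵥ q) i ≠ 0) : ∃ p, (∀ i, p i < 0) ∧ IsGenericSegment A q p := by
  have hneg : IsOpen {p : m → ℝ | ∀ i, p i < 0} := by
    rw [Set.ofPred_forall]
    exact isOpen_iInter_of_finite fun i => isOpen_lt (continuous_apply i) continuous_const
  obtain ⟨p, hp, hp₁, hp₂⟩ := ((dense_setOf_forall_inv_mulVec_ne_zero hA).inter_of_isOpen_left
    (dense_setOf_forall_inv_mulVec_cross_ne_zero hA hq) (isOpen_setOf_forall_inv_mulVec_ne_zero A)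
    ).inter_open_nonempty _ hneg ⟨fun _ => -1, fun _ => neg_one_lt_zero⟩
  exact ⟨p, hp, isGenericSegment_of_forall_ne_zero hq hp₁ hp₂⟩

end Genericity

variable {n : ℕ}

section Game

variable (G : Matrix (Fin n) (Fin n) ℝ)

def orthantMatrix (σ : Fin n → Bool) : Matrix (Fin n) (Fin n) ℝ :=
  1 + G * diagonal fun j => if σ j then 1 else 0

variable {G}

lemma orthantMatrix_flipAt_mulVec (σ : Fin n → Bool) (i : Fin n) {z : Fin n → ℝ} (hz : z i = 0) :
    orthantMatrix G (flipAt σ i) *ᵥ z = orthantMatrix G σ *ᵥ z := by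
  simp only [orthantMatrix, add_mulVec, ← mulVec_mulVec]
  congr 2
  ext j
  by_cases hj : j = i
  · simp [mulVec_diagonal, hj, hz]
  · simp [mulVec_diagonal, flipAt_apply_of_ne σ hj]

lemma orthantMatrix_mulVec_of_signed {σ : Fin n → Bool} {z : Fin n → ℝ}
    (hz : ∀ i, 0 < boolSign (σ i) * z i) : orthantMatrix G σ *ᵥ z = z + G *ᵥ z⁺ := by
  simp only [orthantMatrix, add_mulVec, one_mulVec, ← mulVec_mulVec]
  congr 2
  ext j
  have := hz j
  cases h : σ j <;> simp_all [boolSign, mulVec_diagonal, le_of_lt]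

lemma orthantMatrix_const_false : orthantMatrix G (fun _ => false) = 1 := by
  simp [orthantMatrix]

lemma nashEq_posPart (hdiag : ∀ i, G i i = 0) {q z : Fin n → ℝ} (h : z + G *ᵥ z⁺ = q) :
    NashEq G q z⁺ := by
  intro i
  rw [sum_erase _ (by rw [hdiag, zero_mul]), ← h]
  change z⁺ i = max 0 (z i + (G *ᵥ z⁺) i - (G *ᵥ z⁺) i)
  rw [add_sub_cancel_right, max_comm]
  rfl

lemma neg_of_add_mulVec_posPart_eq (hG : ∀ i j, 0 ≤ G i j) {p z : Fin n → ℝ}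
    (h : z + G *ᵥ z⁺ = p) (hp : ∀ i, p i < 0) (i : Fin n) : z i < 0 := by
  have hGz : 0 ≤ ∑ j, G i j * z⁺ j :=
    sum_nonneg fun j _ => mul_nonneg (hG i j) (posPart_nonneg (z j))
  have hi := congrFun h i
  rw [Pi.add_apply] at hi
  change z i + ∑ j, G i j * z⁺ j = p i at hi
  linarith [hp i]

lemma signedSolutionParity_orthantMatrix_of_neg (hG : ∀ i j, 0 ≤ G i j)
    (hA : ∀ σ, IsUnit (orthantMatrix G σ)) {p : Fin n → ℝ} (hp : ∀ i, p i < 0) :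
    signedSolutionParity (orthantMatrix G) p = 1 := by
  rw [signedSolutionParity, sum_eq_single (fun _ => false), if_pos]
  · simpa [orthantMatrix_const_false, boolSign] using hp
  · refine fun σ _ hσ => if_neg fun hz => hσ (funext fun i => ?_)
    have hneg := neg_of_add_mulVec_posPart_eq hG
      ((orthantMatrix_mulVec_of_signed hz).symm.trans (mulVec_inv_mulVec (hA σ) p)) hp i
    have := hz i
    cases h : σ i
    · rfl
    · simp only [boolSign, h, if_true, one_mul] at this
      exact absurd this hneg.le.not_gt
  · exact fun h => absurd (mem_univ _) h

theorem exists_nashEq_of_isGenericSegment (hdiag : ∀ i, G i i = 0) (hG : ∀ i j, 0 ≤ G i j)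
    (hA : ∀ σ, IsUnit (orthantMatrix G σ)) {q p : Fin n → ℝ} (hp : ∀ i, p i < 0)
    (hqp : IsGenericSegment (orthantMatrix G) q p) : ∃ x, NashEq G q x := by
  have hpar : signedSolutionParity (orthantMatrix G) q ≠ 0 := by
    rw [signedSolutionParity_eq hA (fun σ i _ hz => orthantMatrix_flipAt_mulVec σ i hz) hqp,
      signedSolutionParity_orthantMatrix_of_neg hG hA hp]
    exact one_ne_zero
  obtain ⟨σ, -, hσ⟩ := exists_ne_zero_of_sum_ne_zero hpar
  have hz : ∀ i, 0 < boolSign (σ i) * ((orthantMatrix G σ)⁻¹ *ᵥ q) i :=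
    by_contra fun h => hσ (if_neg h)
  exact ⟨_, nashEq_posPart hdiag
    ((orthantMatrix_mulVec_of_signed hz).symm.trans (mulVec_inv_mulVec (hA σ) q))⟩

end Game

lemma norm_le_of_nashEq {G : Matrix (Fin n) (Fin n) ℝ} (hG : ∀ i j, 0 ≤ G i j) {q x : Fin n → ℝ}
    (h : NashEq G q x) : ‖x‖ ≤ ‖q‖ := by
  have hx : ∀ i, 0 ≤ x i := fun i => by rw [h i]; exact le_max_left _ _
  refine (pi_norm_le_iff_of_nonneg (norm_nonneg q)).2 fun i => ?_
  have hs : 0 ≤ ∑ j ∈ univ.erase i, G i j * x j := sum_nonneg fun j _ => mul_nonneg (hG i j) (hx j)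
  rw [Real.norm_of_nonneg (hx i), h i]
  exact max_le (norm_nonneg _)
    ((sub_le_self _ hs).trans ((le_abs_self _).trans (norm_le_pi_norm q i)))

lemma isClosed_setOf_nashEq :
    IsClosed {T : (Matrix (Fin n) (Fin n) ℝ × (Fin n → ℝ)) × (Fin n → ℝ) |
      NashEq T.1.1 T.1.2 T.2} := by
  simp only [NashEq, Set.ofPred_forall]
  exact isClosed_iInter fun i => isClosed_eq (by fun_prop) (by fun_prop)

open Filter in
lemma isClosed_setOf_exists_nashEq :
    IsClosed {P : Matrix (Fin n) (Fin n) ℝ × (Fin n → ℝ) |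
      (∀ i j, 0 ≤ P.1 i j) ∧ ∃ x, NashEq P.1 P.2 x} := by
  -- instance search does not unfold the type synonym `Matrix` to the product space
  have : SequentialSpace (Matrix (Fin n) (Fin n) ℝ × (Fin n → ℝ)) :=
    inferInstanceAs (SequentialSpace ((Fin n → Fin n → ℝ) × (Fin n → ℝ)))
  refine IsSeqClosed.isClosed fun P P₀ hP hlim => ?_
  choose hG x hx using hP
  have hG₀ (i j : Fin n) : 0 ≤ P₀.1 i j :=
    ge_of_tendsto' (((show Continuous fun P : Matrix (Fin n) (Fin n) ℝ × (Fin n → ℝ) => P.1 i j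
      by fun_prop).tendsto _).comp hlim) fun k => hG k i j
  obtain ⟨C, hC⟩ := isBounded_iff_forall_norm_le.1
    (Metric.isBounded_range_of_tendsto _ ((continuous_snd.tendsto _).comp hlim))
  have hxC (k : ℕ) : x k ∈ Metric.closedBall 0 C :=
    mem_closedBall_zero_iff.2 ((norm_le_of_nashEq (hG k) (hx k)).trans (hC _ ⟨k, rfl⟩))
  obtain ⟨y, -, φ, hφ, hy⟩ := tendsto_subseq_of_bounded Metric.isBounded_closedBall hxC
  exact ⟨hG₀, y, isClosed_setOf_nashEq.mem_of_tendsto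
    ((hlim.comp hφ.tendsto_atTop).prodMk_nhds hy) (Eventually.of_forall fun k => hx (φ k))⟩

open Polynomial in
lemma finite_setOf_det_one_add_smul_eq_zero {m K : Type*} [Fintype m] [DecidableEq m] [Field K]
    (B : Matrix m m K) : {t : K | (1 + t • B).det = 0}.Finite := by
  have hP (t : K) : (det (1 + (X : K[X]) • B.map C)).eval t = (1 + t • B).det := by
    rw [← coe_evalRingHom, RingHom.map_det]
    congr 1
    ext i j
    by_cases h : i = j <;> simp [h] <;> ring
  have hne : det (1 + (X : K[X]) • B.map C) ≠ 0 := fun h => by simpa [h] using hP 0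
  exact (finite_setOfPred_isRoot hne).subset fun t ht => by simpa [hP] using ht

lemma finite_setOf_exists_det_orthantMatrix_smul_eq_zero (G : Matrix (Fin n) (Fin n) ℝ) :
    {t : ℝ | ∃ σ, (orthantMatrix (t • G) σ).det = 0}.Finite :=
  (Set.finite_iUnion fun σ : Fin n → Bool => finite_setOf_det_one_add_smul_eq_zero
    (G * diagonal fun j => if σ j then 1 else 0)).subset fun t ⟨σ, ht⟩ =>
      Set.mem_iUnion.2 ⟨σ, by rwa [orthantMatrix, smul_mul_assoc] at ht⟩

theorem exists_nashEq_of_forall_isUnit {G : Matrix (Fin n) (Fin n) ℝ} (hdiag : ∀ i, G i i = 0)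
    (hG : ∀ i j, 0 ≤ G i j) (hA : ∀ σ, IsUnit (orthantMatrix G σ)) (q : Fin n → ℝ) :
    ∃ x, NashEq G q x := by
  have hgeneric : {q | ∀ σ i, ((orthantMatrix G σ)⁻¹ *ᵥ q) i ≠ 0} ⊆ {q | ∃ x, NashEq G q x} :=
    fun q hq =>
      let ⟨_, hp, hqp⟩ := exists_isGenericSegment hA hq
      exists_nashEq_of_isGenericSegment hdiag hG hA hp hqp
  have hclosed : IsClosed {q | ∃ x, NashEq G q x} := by
    simpa [hG] using isClosed_setOf_exists_nashEq.preimage (Continuous.prodMk_right G)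
  exact closure_minimal hgeneric hclosed
    ((dense_setOf_forall_inv_mulVec_ne_zero hA).closure_eq.symm ▸ Set.mem_univ q)

end

end PublicGoods

open PublicGoods in
theorem exists_nash_of_substitutes_general (n : ℕ) (G : Matrix (Fin n) (Fin n) ℝ)
    (hdiag : ∀ i, G i i = 0) (hsub : ∀ i j, 0 ≤ G i j) :
    ∀ q : Fin n → ℝ, ∃ x : Fin n → ℝ, NashEq G q x := by
  intro q
  set Z := {t : ℝ | ∃ σ, (orthantMatrix (t • G) σ).det = 0}
  have hgood : Set.Ioi 0 ∩ Zᶜ ⊆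
      {t : ℝ | (∀ i j, 0 ≤ (t • G) i j) ∧ ∃ x, NashEq (t • G) q x} := fun t ⟨ht, htZ⟩ => by
    have hG : ∀ i j, 0 ≤ (t • G) i j := fun i j => mul_nonneg (le_of_lt ht) (hsub i j)
    refine ⟨hG, exists_nashEq_of_forall_isUnit (fun i => by simp [hdiag]) hG (fun σ => ?_) q⟩
    exact (isUnit_iff_isUnit_det _).2 (isUnit_iff_ne_zero.2 fun h => htZ ⟨σ, h⟩)
  have hclosed : IsClosed {t : ℝ | (∀ i j, 0 ≤ (t • G) i j) ∧ ∃ x, NashEq (t • G) q x} :=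
    isClosed_setOf_exists_nashEq.preimage (f := fun t : ℝ => (t • G, q)) (by fun_prop)
  have hone : (1 : ℝ) ∈ closure (Set.Ioi 0 ∩ Zᶜ) :=
    ((finite_setOf_exists_det_orthantMatrix_smul_eq_zero G).countable.dense_compl ℝ
      ).open_subset_closure_inter isOpen_Ioi (Set.mem_Ioi.2 one_pos)
  simpa using (closure_minimal hgood hclosed hone).2

theorem exists_nash_of_substitutes (n : ℕ) (hn : 1 ≤ n) (G : Matrix (Fin n) (Fin n) ℝ)
    (hdiag : ∀ i, G i i = 0) (hsub : ∀ i j, 0 ≤ G i j) :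
    ∀ q : Fin n → ℝ, ∃ x : Fin n → ℝ, NashEq G q x :=
  exists_nash_of_substitutes_general n G hdiag hsub
end

section
/- Let n ≥ 1 and let G be a real n×n matrix with zero diagonal all of whose off-diagonal entries are nonpositive (a game of strategic complements). Then the public-good provision game with parameters (G, q) has at least one Nash equilibrium for every q ∈ ℝⁿ if and only if the spectral radius of G is strictly less than 1, i.e., every complex eigenvalue of G has modulus < 1. -/
/-!
Write `A = -G ≥ 0`, so that a Nash equilibrium is a fixed point of the monotone map
`x ↦ max 0 (q + A x)`.

If `ρ(A) < 1`, the resolvent `z ↦ (1 - z A)⁻¹` is holomorphic on a disc of radius `> 1`, so the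
Neumann series `∑ Aᵏ` converges, to a nonnegative matrix. Then `z = ∑ Aᵏ q⁺` satisfies
`q⁺ + A z = z`, the map sends the order interval `[0, z]` into itself, and Knaster–Tarski gives
a fixed point.

Conversely, an equilibrium for `q = 1` is an `x ≥ 0` with `1 + A x ≤ x`. If `G` had an
eigenvalue `μ` with `|μ| ≥ 1`, the moduli `u = |w|` of a left eigenvector would satisfy
`u ≤ uA`, and pairing with `x` gives `∑ uᵢ ≤ u·x - (uA)·x ≤ 0`, forcing `u = 0`.
-/

open Matrix Finset

/-- `μ ∈ ℂ` is an eigenvalue of the real matrix `G` viewed as a complex matrix. -/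
def HasComplexEigenvalue {n : ℕ} (G : Matrix (Fin n) (Fin n) ℝ) (μ : ℂ) : Prop :=
  ∃ v : Fin n → ℂ, v ≠ 0 ∧ (G.map (Complex.ofReal)).mulVec v = μ • v

open scoped ENNReal NNReal

theorem summable_norm_pow_of_spectralRadius_lt_one {A : Type*} [NormedRing A]
    [NormedAlgebra ℂ A] [CompleteSpace A] {a : A} (h : spectralRadius ℂ a < 1) :
    Summable fun k => ‖a ^ k‖ := by
  let p : FormalMultilinearSeries ℂ ℂ A := fun k =>
    ContinuousMultilinearMap.mkPiRing ℂ (Fin k) (a ^ k)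
  obtain ⟨r, hr1, hr⟩ := ENNReal.lt_iff_exists_nnreal_btwn.mp (ENNReal.one_lt_inv.mpr h)
  -- `p` is the Taylor series at `0` of `z ↦ (1 - z • a)⁻¹`, which is holomorphic on the ball
  -- of radius `r > 1`
  have hp : (1 : ℝ≥0∞) < p.radius := hr1.trans_le
    ((spectrum.hasFPowerSeriesOnBall_inverse_one_sub_smul ℂ a).exchange_radius
      ((spectrum.differentiableOn_inverse_one_sub_smul hr).hasFPowerSeriesOnBall
        (zero_lt_one.trans (by exact_mod_cast hr1)))).r_le
  simpa [p] using p.summable_norm_mul_pow (r := 1) (by exact_mod_cast hp)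

theorem spectralRadius_lt_of_forall_lt_of_finite {A : Type*} [NormedRing A] [NormedAlgebra ℂ A]
    {a : A} (hfin : (spectrum ℂ a).Finite) {r : ℝ≥0} (hr : 0 < r)
    (h : ∀ μ ∈ spectrum ℂ a, ‖μ‖₊ < r) :
    spectralRadius ℂ a < r := by
  rw [spectralRadius, ← hfin.coe_toFinset]
  simp only [Finset.mem_coe]
  rw [← Finset.sup_eq_iSup, Finset.sup_lt_iff (by simpa using hr)]
  exact fun μ hμ => mod_cast h μ (by simpa using hμ)

theorem Monotone.exists_isFixedPt {α : Type*} [ConditionallyCompleteLattice α] {f : α → α}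
    (hf : Monotone f) {a b : α} (hab : a ≤ b) (ha : a ≤ f a) (hb : f b ≤ b) :
    ∃ x, Function.IsFixedPt f x := by
  have : Fact (a ≤ b) := ⟨hab⟩
  let g : Set.Icc a b →o Set.Icc a b :=
    ⟨fun x => ⟨f x, ha.trans (hf x.2.1), (hf x.2.2).trans hb⟩, fun _ _ h => hf h⟩
  exact ⟨g.lfp, congrArg Subtype.val g.map_lfp⟩

namespace Matrix

section Eigenvectors

variable {ι K : Type*} [Fintype ι] [DecidableEq ι] [Field K]

theorem mem_spectrum_iff_exists_mulVec_eq_smul {M : Matrix ι ι K} {μ : K} :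
    μ ∈ spectrum K M ↔ ∃ v : ι → K, v ≠ 0 ∧ M *ᵥ v = μ • v := by
  rw [← spectrum_toLin', ← Module.End.hasEigenvalue_iff_mem_spectrum,
    Module.End.hasEigenvalue_iff, Submodule.ne_bot_iff]
  simp [and_comm]

theorem spectrum_transpose (M : Matrix ι ι K) : spectrum K Mᵀ = spectrum K M := by
  ext μ
  simp only [mem_spectrum_iff_isRoot_charpoly, charpoly_transpose]

theorem mem_spectrum_iff_exists_vecMul_eq_smul {M : Matrix ι ι K} {μ : K} :
    μ ∈ spectrum K M ↔ ∃ v : ι → K, v ≠ 0 ∧ v ᵥ* M = μ • v := by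
  simp only [← spectrum_transpose M, mem_spectrum_iff_exists_mulVec_eq_smul, mulVec_transpose]

end Eigenvectors

section LinftyOpNorm

attribute [local instance] Matrix.linftyOpSeminormedAddCommGroup

theorem linfty_opNorm_entry_le {m n α : Type*} [Fintype m] [Fintype n]
    [SeminormedAddCommGroup α] (B : Matrix m n α) (i : m) (j : n) : ‖B i j‖ ≤ ‖B‖ := by
  rw [← coe_nnnorm, ← coe_nnnorm, NNReal.coe_le_coe, linfty_opNNNorm_def]
  exact (Finset.single_le_sum (fun j _ => zero_le) (mem_univ j)).trans
    (Finset.le_sup (f := fun i => ∑ j, ‖B i j‖₊) (mem_univ i))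

end LinftyOpNorm

variable {ι : Type*} [Fintype ι]

theorem mulVec_mono {A : Matrix ι ι ℝ} (hA : ∀ i j, 0 ≤ A i j) : Monotone (A *ᵥ ·) :=
  fun _ _ hxy i => Finset.sum_le_sum fun j _ => mul_le_mul_of_nonneg_left (hxy j) (hA i j)

theorem not_le_vecMul_of_one_add_mulVec_le {A : Matrix ι ι ℝ} {u x : ι → ℝ} (hu0 : 0 ≤ u)
    (hu : u ≠ 0) (hx0 : 0 ≤ x) (hx : 1 + A *ᵥ x ≤ x) : ¬u ≤ u ᵥ* A := by
  intro huA
  have hsum : ∑ i, u i ≤ 0 := calc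
    ∑ i, u i = u ⬝ᵥ 1 := by simp [dotProduct]
    _ ≤ u ⬝ᵥ (x - A *ᵥ x) :=
      dotProduct_le_dotProduct_of_nonneg_left (le_sub_iff_add_le.2 hx) hu0
    _ = u ⬝ᵥ x - (u ᵥ* A) ⬝ᵥ x := by rw [dotProduct_sub, dotProduct_mulVec]
    _ ≤ 0 := sub_nonpos.2 (dotProduct_le_dotProduct_of_nonneg_right huA hx0)
  exact hu (funext ((Finset.sum_eq_zero_iff_of_nonneg fun i _ => hu0 i).1
    (hsum.antisymm (Finset.sum_nonneg fun i _ => hu0 i)) · (mem_univ _)))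

theorem norm_smul_le_vecMul_of_vecMul_eq_smul {A B : Matrix ι ι ℝ}
    (hBA : ∀ i j, |B i j| ≤ A i j) {w : ι → ℂ} {μ : ℂ}
    (hw : w ᵥ* B.map Complex.ofReal = μ • w) :
    ‖μ‖ • (fun i => ‖w i‖) ≤ (fun i => ‖w i‖) ᵥ* A := fun j => calc
  ‖μ‖ * ‖w j‖ = ‖∑ i, w i * B i j‖ := by
      rw [← norm_mul, ← smul_eq_mul, ← Pi.smul_apply, ← hw]; rfl
  _ ≤ ∑ i, ‖w i‖ * A i j := (norm_sum_le _ _).trans <| Finset.sum_le_sum fun i _ => by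
      rw [norm_mul, Complex.norm_real, Real.norm_eq_abs]
      exact mul_le_mul_of_nonneg_left (hBA i j) (norm_nonneg _)

theorem norm_lt_one_of_vecMul_eq_smul {A B : Matrix ι ι ℝ} (hBA : ∀ i j, |B i j| ≤ A i j)
    {x : ι → ℝ} (hx0 : 0 ≤ x) (hx : 1 + A *ᵥ x ≤ x) {w : ι → ℂ} (hw0 : w ≠ 0) {μ : ℂ}
    (hw : w ᵥ* B.map Complex.ofReal = μ • w) : ‖μ‖ < 1 := by
  by_contra! hμ
  refine not_le_vecMul_of_one_add_mulVec_le (fun i => norm_nonneg (w i)) ?_ hx0 hx fun i =>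
    (le_mul_of_one_le_left (norm_nonneg _) hμ).trans
      (norm_smul_le_vecMul_of_vecMul_eq_smul hBA hw i)
  simpa [funext_iff] using hw0

variable [DecidableEq ι]

theorem summable_pow_of_forall_mem_spectrum_norm_lt_one {A : Matrix ι ι ℝ}
    (h : ∀ μ ∈ spectrum ℂ (A.map Complex.ofReal), ‖μ‖ < 1) : Summable fun k => A ^ k := by
  let _ : NormedRing (Matrix ι ι ℂ) := Matrix.linftyOpNormedRing
  let _ : NormedAlgebra ℂ (Matrix ι ι ℂ) := Matrix.linftyOpNormedAlgebra
  have _ : CompleteSpace (Matrix ι ι ℂ) := FiniteDimensional.complete ℂ _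
  have hρ : spectralRadius ℂ (A.map Complex.ofReal) < (1 : ℝ≥0) :=
    spectralRadius_lt_of_forall_lt_of_finite (finite_spectrum _) one_pos fun μ hμ =>
      mod_cast h μ hμ
  have hsum := summable_norm_pow_of_spectralRadius_lt_one (by exact_mod_cast hρ)
  refine Pi.summable.2 fun i => Pi.summable.2 fun j => hsum.of_norm_bounded fun k => ?_
  have hk : (A ^ k).map Complex.ofReal = A.map Complex.ofReal ^ k :=
    map_pow Complex.ofRealHom.mapMatrix A k
  calc ‖(A ^ k) i j‖ = ‖(A.map Complex.ofReal ^ k) i j‖ := by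
        rw [← hk, map_apply, Complex.norm_real]
    _ ≤ ‖A.map Complex.ofReal ^ k‖ := linfty_opNorm_entry_le _ i j

theorem exists_nonneg_add_mulVec_eq {A : Matrix ι ι ℝ} (hA : ∀ i j, 0 ≤ A i j)
    (h : ∀ μ ∈ spectrum ℂ (A.map Complex.ofReal), ‖μ‖ < 1) {w : ι → ℝ} (hw : 0 ≤ w) :
    ∃ z, 0 ≤ z ∧ w + A *ᵥ z = z := by
  have hs := summable_pow_of_forall_mem_spectrum_norm_lt_one h
  have hS : 1 + A * ∑' k, A ^ k = ∑' k, A ^ k := by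
    rw [← hs.tsum_mul_left, hs.tsum_eq_zero_add (f := fun k => A ^ k), pow_zero]
    simp only [pow_succ']
  have hS0 : ∀ i j, 0 ≤ (∑' k, A ^ k) i j := fun i j => by
    have hrow : (∑' k, A ^ k) i = ∑' k, (A ^ k) i := tsum_apply hs
    rw [hrow, tsum_apply (Pi.summable.1 hs i)]
    exact tsum_nonneg fun k => pow_apply_nonneg hA k i j
  refine ⟨(∑' k, A ^ k) *ᵥ w, by simpa using mulVec_mono hS0 hw, ?_⟩
  conv_rhs => rw [← hS]
  rw [add_mulVec, one_mulVec, mulVec_mulVec]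

end Matrix

theorem hasComplexEigenvalue_iff_mem_spectrum {n : ℕ} {G : Matrix (Fin n) (Fin n) ℝ}
    {μ : ℂ} :
    HasComplexEigenvalue G μ ↔ μ ∈ spectrum ℂ (G.map Complex.ofReal) :=
  mem_spectrum_iff_exists_mulVec_eq_smul.symm

theorem nashEq_iff_eq_sup {n : ℕ} {G : Matrix (Fin n) (Fin n) ℝ} (hdiag : ∀ i, G i i = 0)
    {q x : Fin n → ℝ} : NashEq G q x ↔ x = 0 ⊔ (q + (-G) *ᵥ x) := by
  simp only [NashEq, funext_iff]
  refine forall_congr' fun i => ?_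
  rw [Finset.sum_erase _ (by simp [hdiag])]
  simp [mulVec, dotProduct, sub_eq_add_neg]

theorem exists_nash_iff_spectral_radius_lt_one_general (n : ℕ)
    (G : Matrix (Fin n) (Fin n) ℝ) (hdiag : ∀ i, G i i = 0)
    (hcomp : ∀ i j, i ≠ j → G i j ≤ 0) :
    (∀ q : Fin n → ℝ, ∃ x : Fin n → ℝ, NashEq G q x) ↔
      (∀ μ : ℂ, HasComplexEigenvalue G μ → ‖μ‖ < 1) := by
  have hA : ∀ i j, 0 ≤ (-G) i j := fun i j => by
    obtain rfl | hij := eq_or_ne i j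
    · simp [hdiag]
    · simpa using hcomp i j hij
  simp only [nashEq_iff_eq_sup hdiag, hasComplexEigenvalue_iff_mem_spectrum]
  constructor
  · intro hex μ hμ
    obtain ⟨x, hx⟩ := hex 1
    obtain ⟨w, hw0, hw⟩ := mem_spectrum_iff_exists_vecMul_eq_smul.1 hμ
    have hGA : ∀ i j, |G i j| ≤ (-G) i j := fun i j =>
      (abs_of_nonpos (neg_nonneg.1 (hA i j))).le
    exact norm_lt_one_of_vecMul_eq_smul hGA (le_sup_left.trans_eq hx.symm)
      (le_sup_right.trans_eq hx.symm) hw0 hw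
  · intro hσ q
    have hσA : ∀ μ ∈ spectrum ℂ ((-G).map Complex.ofReal), ‖μ‖ < 1 := fun μ hμ => by
      rw [Matrix.map_neg _ Complex.ofReal_neg, ← spectrum.neg_eq, Set.mem_neg] at hμ
      simpa using hσ _ hμ
    obtain ⟨z, hz0, hz⟩ := exists_nonneg_add_mulVec_eq hA hσA (le_sup_left : 0 ≤ 0 ⊔ q)
    have hT : Monotone fun x => 0 ⊔ (q + (-G) *ᵥ x) :=
      monotone_const.sup (monotone_const.add (mulVec_mono hA))
    obtain ⟨x, hx⟩ := hT.exists_isFixedPt hz0 le_sup_left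
      (sup_le hz0 ((add_le_add_left le_sup_right _).trans_eq hz))
    exact ⟨x, hx.symm⟩

theorem exists_nash_iff_spectral_radius_lt_one (n : ℕ) (hn : 1 ≤ n)
    (G : Matrix (Fin n) (Fin n) ℝ) (hdiag : ∀ i, G i i = 0)
    (hcomp : ∀ i j, i ≠ j → G i j ≤ 0) :
    (∀ q : Fin n → ℝ, ∃ x : Fin n → ℝ, NashEq G q x) ↔
      (∀ μ : ℂ, HasComplexEigenvalue G μ → ‖μ‖ < 1) :=
  exists_nash_iff_spectral_radius_lt_one_general n G hdiag hcomp
end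

section
/- Let n ≥ 1 and let G be a real n×n matrix with zero diagonal all of whose off-diagonal entries are nonpositive (a game of strategic complements). If the public-good provision game with parameters (G, q) has at least one Nash equilibrium for every q ∈ ℝⁿ, then for every q ∈ ℝⁿ the Nash equilibrium is unique (equivalently, I + G is then a P-matrix). -/
open Matrix Finset

section Aux

variable {ι : Type*} [Fintype ι] [DecidableEq ι]

/-- Strictly row diagonally dominant real matrices have positive determinant
(homotopy to the identity). -/
lemma det_pos_of_dominant (A : Matrix ι ι ℝ)
    (h : ∀ k, ∑ j ∈ Finset.univ.erase k, |A k j| < A k k) : 0 < A.det := by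
  set B : ℝ → Matrix ι ι ℝ :=
    fun t i j => (1 - t) * (if i = j then 1 else 0) + t * A i j with hB
  have hAkk : ∀ k, 0 < A k k := fun k =>
    lt_of_le_of_lt (Finset.sum_nonneg fun j _ => abs_nonneg _) (h k)
  have hdom : ∀ t ∈ Set.Icc (0:ℝ) 1, (B t).det ≠ 0 := by
    intro t ht
    apply det_ne_zero_of_sum_row_lt_diag
    intro k
    have hBkk : B t k k = (1 - t) + t * A k k := by simp [hB]
    have hBkj : ∀ j, j ≠ k → B t k j = t * A k j := by
      intro j hj; simp [hB, (Ne.symm hj : k ≠ j)]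
    have hpos : 0 < B t k k := by
      rcases eq_or_lt_of_le ht.1 with h0 | h0
      · rw [hBkk, ← h0]; norm_num
      · rw [hBkk]
        have : 0 ≤ 1 - t := by linarith [ht.2]
        nlinarith [hAkk k]
    have hsum : ∑ j ∈ Finset.univ.erase k, ‖B t k j‖
        = t * ∑ j ∈ Finset.univ.erase k, |A k j| := by
      rw [Finset.mul_sum]
      apply Finset.sum_congr rfl
      intro j hj
      rw [hBkj j (Finset.ne_of_mem_erase hj), Real.norm_eq_abs, abs_mul,
        abs_of_nonneg ht.1]
    rw [hsum, Real.norm_eq_abs, abs_of_pos hpos, hBkk]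
    rcases eq_or_lt_of_le ht.1 with h0 | h0
    · rw [← h0]; norm_num
    · have := h k
      nlinarith [ht.2]
  have hcont : Continuous fun t => (B t).det := by
    apply Continuous.matrix_det
    apply continuous_pi; intro i; apply continuous_pi; intro j
    fun_prop
  have hB0 : (B 0).det = 1 := by
    have : B 0 = 1 := by
      ext i j; simp [hB, Matrix.one_apply]
    rw [this, Matrix.det_one]
  have hB1 : (B 1).det = A.det := by
    have : B 1 = A := by ext i j; simp [hB]
    rw [this]
  by_contra hle
  push_neg at hle
  have hne : A.det ≠ 0 := by
    have := hdom 1 (by norm_num)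
    rwa [hB1] at this
  have hlt : A.det < 0 := lt_of_le_of_ne hle hne
  have : (0:ℝ) ∈ Set.Icc ((B 1).det) ((B 0).det) := by
    rw [hB0, hB1]; exact ⟨le_of_lt hlt, by norm_num⟩
  obtain ⟨t, ht, hft⟩ := intermediate_value_Icc' (by norm_num : (0:ℝ) ≤ 1)
    (hcont.continuousOn) this
  exact hdom t ht hft

/-- Sign-reversal lemma for Z-matrices admitting a positive vector with positive image. -/
lemma zero_of_sign_reversal (M : Matrix ι ι ℝ)
    (hoff : ∀ i j, i ≠ j → M i j ≤ 0)
    (d : ι → ℝ) (hd : ∀ i, 0 < d i) (hMd : ∀ i, 0 < ∑ j, M i j * d j)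
    (z : ι → ℝ) (hz : ∀ i, z i * (∑ j, M i j * z j) ≤ 0) : z = 0 := by
  by_contra hzne
  have hne : ∃ i, z i ≠ 0 := by
    by_contra hc; push_neg at hc; exact hzne (funext fun i => hc i)
  obtain ⟨i1, hi1⟩ := hne
  have hnonemp : (Finset.univ : Finset ι).Nonempty := ⟨i1, Finset.mem_univ i1⟩
  obtain ⟨i0, -, hmax⟩ := Finset.exists_max_image Finset.univ (fun i => |z i| / d i) hnonemp
  set c := |z i0| / d i0 with hc
  have hcpos : 0 < c := by
    have h1 : |z i1| / d i1 ≤ c := hmax i1 (Finset.mem_univ i1)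
    have : 0 < |z i1| / d i1 := div_pos (abs_pos.mpr hi1) (hd i1)
    linarith
  set ε : ℝ := if 0 ≤ z i0 then 1 else -1 with hε
  set w : ι → ℝ := fun j => ε * z j with hw
  have hwi0 : w i0 = c * d i0 := by
    have : c * d i0 = |z i0| := div_mul_cancel₀ _ (ne_of_gt (hd i0))
    rw [this, hw]
    by_cases h0 : 0 ≤ z i0
    · simp [hε, h0, abs_of_nonneg h0]
    · push_neg at h0
      simp [hε, not_le.mpr h0, abs_of_neg h0]
  have hwle : ∀ j, w j ≤ c * d j := by
    intro j
    have h1 : |z j| / d j ≤ c := hmax j (Finset.mem_univ j)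
    have h2 : |z j| ≤ c * d j := by
      rw [div_le_iff₀ (hd j)] at h1; linarith
    have h3 : w j ≤ |z j| := by
      rw [hw]
      by_cases h0 : 0 ≤ z i0
      · simp only [hε, if_pos h0, one_mul]; exact le_abs_self _
      · simp only [hε, if_neg h0, neg_one_mul]; exact neg_le_abs _
    linarith
  have hkey : c * ∑ j, M i0 j * d j ≤ ∑ j, M i0 j * w j := by
    rw [Finset.mul_sum]
    apply Finset.sum_le_sum
    intro j _
    by_cases hj : j = i0
    · subst hj; rw [hwi0]; ring_nf; exact le_refl _
    · have hM : M i0 j ≤ 0 := hoff i0 j (Ne.symm hj)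
      have := hwle j
      nlinarith
  have hpos : 0 < ∑ j, M i0 j * w j :=
    lt_of_lt_of_le (mul_pos hcpos (hMd i0)) hkey
  have hwpos : 0 < w i0 := by rw [hwi0]; exact mul_pos hcpos (hd i0)
  have hprod : w i0 * (∑ j, M i0 j * w j) ≤ 0 := by
    have hsum : ∑ j, M i0 j * w j = ε * ∑ j, M i0 j * z j := by
      rw [Finset.mul_sum]; apply Finset.sum_congr rfl; intro j _; rw [hw]; ring
    have hsq : ε * ε = 1 := by
      rw [hε]; by_cases h0 : 0 ≤ z i0 <;> simp [h0]
    calc w i0 * (∑ j, M i0 j * w j) = (ε * ε) * (z i0 * ∑ j, M i0 j * z j) := by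
          rw [hsum, hw]; ring
      _ = z i0 * ∑ j, M i0 j * z j := by rw [hsq]; ring
      _ ≤ 0 := hz i0
  nlinarith

end Aux

theorem unique_nash_of_exists_complements (n : ℕ) (hn : 1 ≤ n)
    (G : Matrix (Fin n) (Fin n) ℝ) (hdiag : ∀ i, G i i = 0)
    (hcomp : ∀ i j, i ≠ j → G i j ≤ 0)
    (hex : ∀ q : Fin n → ℝ, ∃ x : Fin n → ℝ, NashEq G q x) :
    (∀ q : Fin n → ℝ, ∃! x : Fin n → ℝ, NashEq G q x) ∧ IsPMatrix (1 + G) := by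
  -- sums over erase equal full sums since diagonal is zero
  have hsum_erase : ∀ (i : Fin n) (x : Fin n → ℝ),
      ∑ j ∈ Finset.univ.erase i, G i j * x j = ∑ j, G i j * x j := by
    intro i x
    apply Finset.sum_erase
    rw [hdiag i, zero_mul]
  -- basic properties of Nash equilibria
  have hNE_nonneg : ∀ q x, NashEq G q x → ∀ i, 0 ≤ x i := by
    intro q x hx i; rw [hx i]; exact le_max_left _ _
  have hNE_ge : ∀ q x, NashEq G q x → ∀ i, q i ≤ x i + ∑ j, G i j * x j := by
    intro q x hx i
    have := le_max_right 0 (q i - ∑ j ∈ Finset.univ.erase i, G i j * x j)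
    rw [← hx i, hsum_erase i x] at this
    linarith
  have hNE_comp : ∀ q x, NashEq G q x → ∀ i,
      x i * (x i + (∑ j, G i j * x j) - q i) = 0 := by
    intro q x hx i
    rcases le_total (q i - ∑ j ∈ Finset.univ.erase i, G i j * x j) 0 with h | h
    · have hx0 : x i = 0 := by rw [hx i, max_eq_left h]
      rw [hx0, zero_mul]
    · have hx0 : x i = q i - ∑ j ∈ Finset.univ.erase i, G i j * x j := by
        rw [hx i, max_eq_right h]
      rw [hsum_erase i x] at hx0
      rw [hx0]; ring_nf
  -- the matrix M = 1 + G
  set M : Matrix (Fin n) (Fin n) ℝ := 1 + G with hM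
  have hMapp : ∀ i j, M i j = (if i = j then 1 else 0) + G i j := by
    intro i j; rw [hM]; simp [Matrix.one_apply]
  have hMoff : ∀ i j, i ≠ j → M i j ≤ 0 := by
    intro i j hij
    rw [hMapp, if_neg hij, zero_add]
    exact hcomp i j hij
  have hMsum : ∀ (i : Fin n) (x : Fin n → ℝ),
      ∑ j, M i j * x j = x i + ∑ j, G i j * x j := by
    intro i x
    have : ∀ j, M i j * x j = (if i = j then 1 else 0) * x j + G i j * x j := by
      intro j; rw [hMapp]; ring
    simp_rw [this, Finset.sum_add_distrib, ite_mul, one_mul, zero_mul,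
      Finset.sum_ite_eq (Finset.univ : Finset (Fin n)) i x, if_pos (Finset.mem_univ i)]
  -- obtain the positive vector d from existence at q ≡ 1
  obtain ⟨d, hdNE⟩ := hex (fun _ => 1)
  have hd_nonneg : ∀ i, 0 ≤ d i := hNE_nonneg _ _ hdNE
  have hGd_nonpos : ∀ i, ∑ j ∈ Finset.univ.erase i, G i j * d j ≤ 0 := by
    intro i
    apply Finset.sum_nonpos
    intro j hj
    exact mul_nonpos_of_nonpos_of_nonneg
      (hcomp i j (Ne.symm (Finset.ne_of_mem_erase hj))) (hd_nonneg j)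
  have hd_eq : ∀ i, d i = 1 - ∑ j ∈ Finset.univ.erase i, G i j * d j := by
    intro i
    have h : d i = max 0 (1 - ∑ j ∈ Finset.univ.erase i, G i j * d j) := hdNE i
    rw [h, max_eq_right]
    linarith [hGd_nonpos i]
  have hd_pos : ∀ i, 0 < d i := by
    intro i; rw [hd_eq i]; linarith [hGd_nonpos i]
  have hMd : ∀ i, ∑ j, M i j * d j = 1 := by
    intro i
    rw [hMsum i d, ← hsum_erase i d]
    linarith [hd_eq i]
  constructor
  · -- uniqueness
    intro q
    obtain ⟨x, hx⟩ := hex q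
    refine ⟨x, hx, ?_⟩
    intro y hy
    -- show y = x via sign reversal of z = y - x
    set z : Fin n → ℝ := fun j => y j - x j with hz
    have hkey : ∀ i, z i * (∑ j, M i j * z j) ≤ 0 := by
      intro i
      have hMz : ∑ j, M i j * z j = (y i + (∑ j, G i j * y j) - q i)
          - (x i + (∑ j, G i j * x j) - q i) := by
        rw [hMsum i z]
        have : ∑ j, G i j * z j = (∑ j, G i j * y j) - ∑ j, G i j * x j := by
          rw [← Finset.sum_sub_distrib]
          apply Finset.sum_congr rfl; intro j _; rw [hz]; ring
        rw [this, hz]; ring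
      have hxg := hNE_ge q x hx i
      have hyg := hNE_ge q y hy i
      have hxc := hNE_comp q x hx i
      have hyc := hNE_comp q y hy i
      have hx0 := hNE_nonneg q x hx i
      have hy0 := hNE_nonneg q y hy i
      have hzi : z i = y i - x i := rfl
      rw [hMz, hzi]
      nlinarith [mul_nonneg hx0 (by linarith : 0 ≤ y i + (∑ j, G i j * y j) - q i),
        mul_nonneg hy0 (by linarith : 0 ≤ x i + (∑ j, G i j * x j) - q i)]
    have hz0 : z = 0 := zero_of_sign_reversal M hMoff d hd_pos
      (fun i => by rw [hMd i]; norm_num) z hkey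
    funext i
    have h2 : y i - x i = 0 := congrFun hz0 i
    linarith
  · -- P-matrix
    intro s hs
    set v : {i // i ∈ s} → ℝ := fun j => d j.val with hv
    set A : Matrix {i // i ∈ s} {i // i ∈ s} ℝ :=
      fun i j => M i.val j.val * v j with hA
    have hvpos : ∀ j, 0 < v j := fun j => hd_pos j.val
    -- row sums of the principal submatrix scaled by d are positive
    have hrow : ∀ k : {i // i ∈ s}, 0 < ∑ j, A k j := by
      intro k
      have hsub : ∑ j : {i // i ∈ s}, A k j = ∑ j ∈ s, M k.val j * d j := by
        rw [hA]
        rw [Finset.sum_coe_sort s (fun j => M k.val j * d j)]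
      have hfull : ∑ j ∈ s, M k.val j * d j ≥ ∑ j, M k.val j * d j := by
        have hsplit : ∑ j ∈ Finset.univ \ s, M k.val j * d j
            + ∑ j ∈ s, M k.val j * d j = ∑ j, M k.val j * d j :=
          Finset.sum_sdiff (Finset.subset_univ s)
        have hnp : ∑ j ∈ Finset.univ \ s, M k.val j * d j ≤ 0 := by
          apply Finset.sum_nonpos
          intro j hj
          have hjs : j ∉ s := (Finset.mem_sdiff.mp hj).2
          have hne : k.val ≠ j := by
            intro h; exact hjs (h ▸ k.property)
          exact mul_nonpos_of_nonpos_of_nonneg (hMoff k.val j hne) (hd_nonneg j)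
        linarith
      rw [hsub]
      have := hMd k.val
      linarith
    have hAdiag : ∀ k : {i // i ∈ s}, A k k = v k := by
      intro k
      rw [hA]
      simp only
      rw [hMapp, if_pos rfl, hdiag, add_zero, one_mul]
    have hAoff : ∀ k j : {i // i ∈ s}, j ≠ k → A k j ≤ 0 := by
      intro k j hjk
      have : k.val ≠ j.val := fun h => hjk (Subtype.ext h.symm)
      exact mul_nonpos_of_nonpos_of_nonneg (hMoff _ _ this) (le_of_lt (hvpos j))
    have hdom : ∀ k, ∑ j ∈ Finset.univ.erase k, |A k j| < A k k := by
      intro k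
      have h1 : ∑ j ∈ Finset.univ.erase k, |A k j|
          = -∑ j ∈ Finset.univ.erase k, A k j := by
        rw [← Finset.sum_neg_distrib]
        apply Finset.sum_congr rfl
        intro j hj
        exact abs_of_nonpos (hAoff k j (Finset.ne_of_mem_erase hj))
      have h2 : ∑ j ∈ Finset.univ.erase k, A k j = (∑ j, A k j) - A k k :=
        Finset.sum_erase_eq_sub (Finset.mem_univ k)
      rw [h1, h2]
      linarith [hrow k]
    have hdetA : 0 < A.det := det_pos_of_dominant A hdom
    have hfact : A = (M.submatrix (Subtype.val : {i // i ∈ s} → Fin n) Subtype.val)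
        * Matrix.diagonal v := by
      ext i j
      rw [Matrix.mul_diagonal]
      rfl
    rw [hfact, Matrix.det_mul, Matrix.det_diagonal] at hdetA
    have hprod : 0 < ∏ j, v j := Finset.prod_pos (fun j _ => hvpos j)
    rcases mul_pos_iff.mp hdetA with ⟨h1, _⟩ | ⟨_, h2⟩
    · exact h1
    · linarith
end

section
/- Let n ≥ 1 and let G be a real n×n matrix with zero diagonal such that Σ_{j≠i} |G_ij| < 1 for every row i (so that I + G is strictly diagonally dominant). Then for every q ∈ ℝⁿ the public-good provision game with parameters (G, q) has exactly one Nash equilibrium. -/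
open Matrix Finset

theorem unique_nash_of_diag_dominant (n : ℕ) (hn : 1 ≤ n)
    (G : Matrix (Fin n) (Fin n) ℝ) (hdiag : ∀ i, G i i = 0)
    (hdd : ∀ i, ∑ j ∈ Finset.univ.erase i, |G i j| < 1) :
    ∀ q : Fin n → ℝ, ∃! x : Fin n → ℝ, NashEq G q x := by
  intro q
  have hne : (Finset.univ : Finset (Fin n)).Nonempty := by
    have : Nonempty (Fin n) := ⟨⟨0, hn⟩⟩
    exact Finset.univ_nonempty
  set K₀ : ℝ := Finset.univ.sup' hne (fun i => ∑ j ∈ Finset.univ.erase i, |G i j|) with hK₀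
  have hK₀lt : K₀ < 1 := by
    rw [hK₀, Finset.sup'_lt_iff]
    intro i _; exact hdd i
  have hK₀le : ∀ i, (∑ j ∈ Finset.univ.erase i, |G i j|) ≤ K₀ := fun i =>
    Finset.le_sup' (fun i => ∑ j ∈ Finset.univ.erase i, |G i j|) (Finset.mem_univ i)
  set K : NNReal := ⟨max K₀ 0, le_max_right _ _⟩ with hK
  have hKcoe : (K : ℝ) = max K₀ 0 := rfl
  set T : (Fin n → ℝ) → Fin n → ℝ :=
    fun x i => max 0 (q i - ∑ j ∈ Finset.univ.erase i, G i j * x j) with hT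
  have key : ∀ x, NashEq G q x ↔ Function.IsFixedPt T x := by
    intro x
    constructor
    · intro h; funext i; exact (h i).symm
    · intro h i; exact (congrFun h i).symm
  have hlip : LipschitzWith K T := by
    apply LipschitzWith.of_dist_le_mul
    intro x y
    have hKd : 0 ≤ (K : ℝ) * dist x y :=
      mul_nonneg (le_max_right _ _) dist_nonneg
    rw [dist_pi_le_iff hKd]
    intro i
    have h1 : dist (T x i) (T y i) ≤
        |(∑ j ∈ Finset.univ.erase i, G i j * y j) -
          (∑ j ∈ Finset.univ.erase i, G i j * x j)| := by
      rw [Real.dist_eq]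
      have := abs_max_sub_max_le_abs
        (q i - ∑ j ∈ Finset.univ.erase i, G i j * x j)
        (q i - ∑ j ∈ Finset.univ.erase i, G i j * y j) 0
      calc |T x i - T y i|
          = |max (q i - ∑ j ∈ Finset.univ.erase i, G i j * x j) 0 -
              max (q i - ∑ j ∈ Finset.univ.erase i, G i j * y j) 0| := by
            simp [hT, max_comm]
        _ ≤ |(q i - ∑ j ∈ Finset.univ.erase i, G i j * x j) -
              (q i - ∑ j ∈ Finset.univ.erase i, G i j * y j)| := this
        _ = |(∑ j ∈ Finset.univ.erase i, G i j * y j) -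
              (∑ j ∈ Finset.univ.erase i, G i j * x j)| := by ring_nf
    have h2 : |(∑ j ∈ Finset.univ.erase i, G i j * y j) -
          (∑ j ∈ Finset.univ.erase i, G i j * x j)| ≤
        (∑ j ∈ Finset.univ.erase i, |G i j|) * dist x y := by
      rw [← Finset.sum_sub_distrib]
      calc |∑ j ∈ Finset.univ.erase i, (G i j * y j - G i j * x j)|
          ≤ ∑ j ∈ Finset.univ.erase i, |G i j * y j - G i j * x j| :=
            Finset.abs_sum_le_sum_abs _ _
        _ ≤ ∑ j ∈ Finset.univ.erase i, |G i j| * dist x y := by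
            apply Finset.sum_le_sum
            intro j _
            rw [← mul_sub, abs_mul]
            exact mul_le_mul_of_nonneg_left
              (by rw [← Real.dist_eq, dist_comm]; exact dist_le_pi_dist x y j)
              (abs_nonneg _)
        _ = (∑ j ∈ Finset.univ.erase i, |G i j|) * dist x y := by
            rw [Finset.sum_mul]
    calc dist (T x i) (T y i) ≤ (∑ j ∈ Finset.univ.erase i, |G i j|) * dist x y :=
          h1.trans h2
      _ ≤ (K : ℝ) * dist x y := by
          apply mul_le_mul_of_nonneg_right _ dist_nonneg
          exact (hK₀le i).trans (le_max_left _ _)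
  have hc : ContractingWith K T := by
    constructor
    · have : (K : ℝ) < 1 := by
        rw [hKcoe]; exact max_lt hK₀lt one_pos
      exact_mod_cast this
    · exact hlip
  refine ⟨hc.fixedPoint T, (key _).mpr (hc.fixedPoint_isFixedPt), fun y hy => ?_⟩
  exact hc.fixedPoint_unique ((key y).mp hy)
end

section
/- Let n ≥ 1, let G be a real n×n matrix with zero diagonal such that I + G is invertible, and let q ∈ ℝⁿ. If x is a Nash equilibrium of the public-good provision game with parameters (G, q) all of whose entries are strictly positive, then x = (I+G)⁻¹ q; i.e., x equals the alpha-centrality vector c_alpha(G, −1, q) = (I − (−1)·G)⁻¹ q of the network G with parameter α = −1 and exogenous vector q. -/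
open Matrix Finset

theorem interior_nash_eq_alpha_centrality (n : ℕ) (hn : 1 ≤ n)
    (G : Matrix (Fin n) (Fin n) ℝ) (hdiag : ∀ i, G i i = 0)
    (hinv : IsUnit (1 + G).det) (q x : Fin n → ℝ)
    (hx : NashEq G q x) (hpos : ∀ i, 0 < x i) :
    x = (1 - (-1 : ℝ) • G)⁻¹.mulVec q := by
  have key : (1 + G).mulVec x = q := by
    funext i
    have h := hx i
    have hpos' := hpos i
    have hmax : x i = q i - ∑ j ∈ Finset.univ.erase i, G i j * x j := by
      rcases le_or_gt (q i - ∑ j ∈ Finset.univ.erase i, G i j * x j) 0 with hle | hlt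
      · rw [max_eq_left hle] at h; linarith
      · rw [max_eq_right hlt.le] at h; exact h
    have hsum : ∑ j ∈ Finset.univ.erase i, G i j * x j = ∑ j, G i j * x j := by
      rw [Finset.sum_erase]
      rw [hdiag i, zero_mul]
    simp only [Matrix.mulVec, Matrix.add_apply, Matrix.one_apply, dotProduct,
      Matrix.add_apply]
    rw [Finset.sum_congr rfl (fun j _ => add_mul _ _ _ :
      ∀ j ∈ Finset.univ, ((if i = j then (1:ℝ) else 0) + G i j) * x j
        = (if i = j then (1:ℝ) else 0) * x j + G i j * x j),
      Finset.sum_add_distrib]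
    simp only [ite_mul, one_mul, zero_mul]
    rw [Finset.sum_ite_eq Finset.univ i (fun j => x j)]
    simp only [Finset.mem_univ, if_true, ← hsum]
    linarith
  have h1 : (1 - (-1 : ℝ) • G) = 1 + G := by
    simp [sub_eq_add_neg]
  rw [h1, ← key, Matrix.mulVec_mulVec, Matrix.nonsing_inv_mul _ hinv, Matrix.one_mulVec]
end

section
/- Let n ≥ 1, let G be a real n×n matrix with zero diagonal, let c ∈ ℝⁿ with c_i > 0 for all i, let λ ∈ ℝⁿ with λ_i > 0 for all i, let Λ = diag(λ), and let b_1, …, b_n : ℝ → ℝ be differentiable functions. Define u_k(x) = b_k(x_k + Σ_{j≠k} G_{kj} x_j) − c_k x_k. Suppose I + Λ⁻¹GᵀΛ is invertible and x* ∈ ℝⁿ with all entries strictly positive maximizes Σ_k λ_k u_k(x) over {x ⪰ 0}. Then the vector v ∈ ℝⁿ with entries v_i = b_i'(((I+G)x*)_i) satisfies v = (I + Λ⁻¹GᵀΛ)⁻¹ c; moreover, if I + G is also invertible, then x* = (I+G)⁻¹ q^λ where q^λ := (I+G)x* is the vector determined by b_i'(q^λ_i) = ((I + Λ⁻¹GᵀΛ)⁻¹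 c)_i for all i. -/
open Matrix Finset

/-!
At an interior maximiser of the weighted welfare `∑ₖ λₖ uₖ` every partial derivative
vanishes. With `vₖ = bₖ'(((I + G) x)ₖ)` the derivative in direction `i` is
`∑ₖ λₖ vₖ (I + G)ₖᵢ - λᵢ cᵢ`, so the first-order conditions read `(I + G)ᵀ Λ v = Λ c`.
Since `Λ (I + Λ⁻¹ Gᵀ Λ) = (I + G)ᵀ Λ`, cancelling the invertible `Λ` gives
`(I + Λ⁻¹ Gᵀ Λ) v = c`.
-/

variable {ι : Type*} [Fintype ι]

theorem isLocalMax_of_isMaxOn_Ici_zero {f : (ι → ℝ) → ℝ} {x : ι → ℝ}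
    (hf : IsMaxOn f (Set.Ici 0) x) (hx : ∀ i, 0 < x i) : IsLocalMax f x := by
  refine hf.isLocalMax ?_
  rw [← Set.pi_univ_Ici]
  exact set_pi_mem_nhds Set.finite_univ fun i _ => Ici_mem_nhds (hx i)

variable [DecidableEq ι]

theorem Matrix.one_add_mulVec_apply_of_diag_eq_zero {R : Type*} [NonAssocSemiring R]
    {G : Matrix ι ι R} (hG : ∀ i, G i i = 0) (y : ι → R) (k : ι) :
    ((1 + G) *ᵥ y) k = y k + ∑ j ∈ univ.erase k, G k j * y j := by
  rw [add_mulVec, one_mulVec, Pi.add_apply, mulVec, dotProduct,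
    Finset.sum_erase _ (by rw [hG k, zero_mul])]

theorem transpose_mulVec_mul_deriv_eq_of_isLocalMax (A : Matrix ι ι ℝ) {b : ι → ℝ → ℝ}
    (c l : ι → ℝ) {x : ι → ℝ} (hb : ∀ k, DifferentiableAt ℝ (b k) ((A *ᵥ x) k))
    (hmax : IsLocalMax (fun y => ∑ k, l k * (b k ((A *ᵥ y) k) - c k * y k)) x) :
    Aᵀ *ᵥ (l * fun k => deriv (b k) ((A *ᵥ x) k)) = l * c := by
  funext i
  set e : ι → ℝ := Pi.single i 1
  set φ : ℝ → ℝ :=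
    fun t => ∑ k, l k * (b k ((A *ᵥ x) k + t * A k i) - c k * (x k + t * e k))
  have hline : IsLocalMax φ 0 := by
    have hφ : φ = (fun y => ∑ k, l k * (b k ((A *ᵥ y) k) - c k * y k)) ∘ fun t => x + t • e := by
      funext t
      simp [φ, e, mulVec_add, mulVec_smul]
    rw [hφ]
    exact IsLocalMax.comp_continuous (by simpa using hmax) (by fun_prop)
  have hderiv : HasDerivAt φ (∑ k, l k * (deriv (b k) ((A *ᵥ x) k) * A k i - c k * e k)) 0 := by
    refine HasDerivAt.fun_sum fun k _ => (HasDerivAt.sub ?_ ?_).const_mul (l k)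
    · have hb' : HasDerivAt (b k) (deriv (b k) ((A *ᵥ x) k)) ((A *ᵥ x) k + 0 * A k i) := by
        simpa using (hb k).hasDerivAt
      exact hb'.comp 0 ((hasDerivAt_mul_const (A k i)).const_add ((A *ᵥ x) k))
    · simpa using (((hasDerivAt_id 0).mul_const (e k)).const_add (x k)).const_mul (c k)
  have hzero := hline.hasDerivAt_eq_zero hderiv
  simp only [mul_sub, Finset.sum_sub_distrib, e, Pi.single_apply, mul_ite, mul_one, mul_zero,
    Finset.sum_ite_eq', Finset.mem_univ, if_true, sub_eq_zero] at hzero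
  show ∑ k, A k i * (l k * deriv (b k) ((A *ᵥ x) k)) = l i * c i
  rw [← hzero]
  exact Finset.sum_congr rfl fun k _ => by ring

theorem Matrix.one_add_inv_diagonal_mul_transpose_mulVec_eq {K : Type*} [Field K]
    (G : Matrix ι ι K) {l : ι → K} (hl : ∀ i, l i ≠ 0) {v c : ι → K}
    (h : (1 + G)ᵀ *ᵥ (l * v) = l * c) :
    (1 + (diagonal l)⁻¹ * Gᵀ * diagonal l) *ᵥ v = c := by
  have hD : IsUnit (diagonal l).det := by
    rw [det_diagonal]; exact (Finset.prod_ne_zero_iff.mpr fun i _ => hl i).isUnit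
  have hconj :
      diagonal l * (1 + (diagonal l)⁻¹ * Gᵀ * diagonal l) = (1 + G)ᵀ * diagonal l := by
    rw [mul_add, mul_one, ← mul_assoc, ← mul_assoc, mul_nonsing_inv _ hD, one_mul,
      transpose_add, transpose_one, add_mul, one_mul]
  have hdiag : ∀ w : ι → K, diagonal l *ᵥ w = l * w := fun w => funext (mulVec_diagonal l w)
  have hlc : l * ((1 + (diagonal l)⁻¹ * Gᵀ * diagonal l) *ᵥ v) = l * c := by
    rw [← hdiag, mulVec_mulVec, hconj, ← mulVec_mulVec, hdiag, h]
  funext i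
  exact mul_left_cancel₀ (hl i) (congrFun hlc i)

theorem interior_pareto_eq_alpha_centrality_general (n : ℕ)
    (G : Matrix (Fin n) (Fin n) ℝ) (hdiag : ∀ i, G i i = 0)
    (c l : Fin n → ℝ) (hl : ∀ i, 0 < l i)
    (b : Fin n → ℝ → ℝ) (hb : ∀ k, Differentiable ℝ (b k))
    (u : (Fin n → ℝ) → Fin n → ℝ)
    (hu : ∀ x k, u x k = b k (x k + ∑ j ∈ Finset.univ.erase k, G k j * x j) - c k * x k)
    (hΛinv : IsUnit (1 + (Matrix.diagonal l)⁻¹ * Gᵀ * Matrix.diagonal l).det)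
    (x : Fin n → ℝ) (hpos : ∀ i, 0 < x i)
    (hmax : ∀ y : Fin n → ℝ, 0 ≤ y → ∑ k, l k * u y k ≤ ∑ k, l k * u x k) :
    (∀ i, deriv (b i) ((1 + G).mulVec x i) =
      ((1 + (Matrix.diagonal l)⁻¹ * Gᵀ * Matrix.diagonal l)⁻¹.mulVec c) i) ∧
    (IsUnit (1 + G).det → x = (1 + G)⁻¹.mulVec ((1 + G).mulVec x)) := by
  have hwelfare : (fun y => ∑ k, l k * u y k) =
      fun y => ∑ k, l k * (b k (((1 + G) *ᵥ y) k) - c k * y k) := by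
    funext y
    simp only [hu, one_add_mulVec_apply_of_diag_eq_zero hdiag]
  have hloc : IsLocalMax (fun y => ∑ k, l k * u y k) x :=
    isLocalMax_of_isMaxOn_Ici_zero (fun y hy => hmax y hy) hpos
  rw [hwelfare] at hloc
  have hfoc := transpose_mulVec_mul_deriv_eq_of_isLocalMax (1 + G) c l
    (fun k => (hb k).differentiableAt) hloc
  have hv := one_add_inv_diagonal_mul_transpose_mulVec_eq G (fun i => (hl i).ne') hfoc
  refine ⟨fun i => ?_, fun h => ?_⟩
  · rw [← hv, mulVec_mulVec, nonsing_inv_mul _ hΛinv, one_mulVec]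
  · rw [mulVec_mulVec, nonsing_inv_mul _ h, one_mulVec]

theorem interior_pareto_eq_alpha_centrality (n : ℕ) (hn : 1 ≤ n)
    (G : Matrix (Fin n) (Fin n) ℝ) (hdiag : ∀ i, G i i = 0)
    (c l : Fin n → ℝ) (hc : ∀ i, 0 < c i) (hl : ∀ i, 0 < l i)
    (b : Fin n → ℝ → ℝ) (hb : ∀ k, Differentiable ℝ (b k))
    (u : (Fin n → ℝ) → Fin n → ℝ)
    (hu : ∀ x k, u x k = b k (x k + ∑ j ∈ Finset.univ.erase k, G k j * x j) - c k * x k)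
    (hΛinv : IsUnit (1 + (Matrix.diagonal l)⁻¹ * Gᵀ * Matrix.diagonal l).det)
    (x : Fin n → ℝ) (hpos : ∀ i, 0 < x i)
    (hmax : ∀ y : Fin n → ℝ, 0 ≤ y → ∑ k, l k * u y k ≤ ∑ k, l k * u x k) :
    (∀ i, deriv (b i) ((1 + G).mulVec x i) =
      ((1 + (Matrix.diagonal l)⁻¹ * Gᵀ * Matrix.diagonal l)⁻¹.mulVec c) i) ∧
    (IsUnit (1 + G).det → x = (1 + G)⁻¹.mulVec ((1 + G).mulVec x)) :=
  interior_pareto_eq_alpha_centrality_general n G hdiag c l hl b hb u hu hΛinv x hpos hmax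
end

section
/- Let n ≥ 1, let G be a real n×n matrix with zero diagonal, let c ∈ ℝⁿ with c_i > 0 for all i, let λ ∈ ℝⁿ with λ_i > 0 for all i, let Λ = diag(λ), and let b_1, …, b_n : ℝ → ℝ be differentiable functions. Define u_k(x) = b_k(x_k + Σ_{j≠k} G_{kj} x_j) − c_k x_k. Let σ : {1,…,n} → {1,…,K} assign each agent to a coalition, and let G_C be the coalition-modified matrix with (G_C)_{kl} = G_{kl} if σ(k) = σ(l) and (G_C)_{kl} = 0 otherwise. Suppose x* ∈ ℝⁿ has all entries strictly positive and satisfies, for every i, the intragroup first-order condition λ_i b_i'(((I+G)x*)_i) + Σ_{k≠i, σ(k)=σ(i)} λ_k G_{ki} b_k'(((I+G)x*)_k) = λ_i c_i (an interior semi-cooperative equilibrium). If I + Λ⁻¹G_CᵀΛ is invertible, then the vector v with v_i = b_i'(((I+G)x*)_i) satisfies v = (I + Λ⁻¹G_CᵀΛ)⁻¹ c; moreover, if I + G is also invertible, then x* = (I+G)⁻¹ q where q := (I+G)x* is the vector determined by b_i'(q_i) = ((I + Λ⁻¹G_CᵀΛ)⁻¹ c)_i for all i. -/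
open Matrix Finset

theorem interior_semicooperative_eq_alpha_centrality (n K : ℕ) (hn : 1 ≤ n)
    (G : Matrix (Fin n) (Fin n) ℝ) (hdiag : ∀ i, G i i = 0)
    (c l : Fin n → ℝ) (hc : ∀ i, 0 < c i) (hl : ∀ i, 0 < l i)
    (b : Fin n → ℝ → ℝ) (hb : ∀ k, Differentiable ℝ (b k))
    (σ : Fin n → Fin K)
    (GC : Matrix (Fin n) (Fin n) ℝ)
    (hGC : ∀ k j, GC k j = if σ k = σ j then G k j else 0)
    (x : Fin n → ℝ) (hpos : ∀ i, 0 < x i)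
    (hfoc : ∀ i, l i * deriv (b i) ((1 + G).mulVec x i) +
      ∑ k ∈ (Finset.univ.erase i).filter (fun k => σ k = σ i),
        l k * G k i * deriv (b k) ((1 + G).mulVec x k) = l i * c i)
    (hΛinv : IsUnit (1 + (Matrix.diagonal l)⁻¹ * GCᵀ * Matrix.diagonal l).det) :
    (∀ i, deriv (b i) ((1 + G).mulVec x i) =
      ((1 + (Matrix.diagonal l)⁻¹ * GCᵀ * Matrix.diagonal l)⁻¹.mulVec c) i) ∧
    (IsUnit (1 + G).det → x = (1 + G)⁻¹.mulVec ((1 + G).mulVec x)) := by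
  set M := 1 + (Matrix.diagonal l)⁻¹ * GCᵀ * Matrix.diagonal l with hM
  set v : Fin n → ℝ := fun i => deriv (b i) ((1 + G).mulVec x i) with hv
  have hlne : ∀ i, l i ≠ 0 := fun i => (hl i).ne'
  have hDinv : (Matrix.diagonal l)⁻¹ = Matrix.diagonal (fun i => (l i)⁻¹) := by
    refine Matrix.inv_eq_right_inv ?_
    rw [Matrix.diagonal_mul_diagonal]
    convert Matrix.diagonal_one with i
    exact mul_inv_cancel₀ (hlne i)
  have hMv : M.mulVec v = c := by
    funext i
    have hentry : ∀ j, M i j = (if i = j then 1 else 0) + (l i)⁻¹ * GC j i * l j := by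
      intro j
      simp [hM, Matrix.add_apply, Matrix.one_apply, hDinv,
        Matrix.diagonal_mul, Matrix.mul_diagonal, Matrix.transpose_apply,
        mul_comm, mul_assoc]
    have hsum : M.mulVec v i = v i + ∑ j, (l i)⁻¹ * GC j i * l j * v j := by
      simp only [Matrix.mulVec, dotProduct, hentry, add_mul, Finset.sum_add_distrib,
        ite_mul, one_mul, zero_mul, Finset.sum_ite_eq, Finset.mem_univ, if_true]
    have hsum2 : ∑ j, GC j i * l j * v j
        = ∑ k ∈ (Finset.univ.erase i).filter (fun k => σ k = σ i),
          l k * G k i * v k := by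
      rw [Finset.sum_filter]
      rw [← Finset.sum_erase (a := i) (f := fun j => GC j i * l j * v j) Finset.univ
        (by simp [hGC i i, hdiag i])]
      refine Finset.sum_congr rfl fun j hj => ?_
      by_cases h : σ j = σ i
      · rw [hGC, if_pos h, if_pos h]; ring
      · rw [hGC, if_neg h, if_neg h]; simp
    have key : l i * M.mulVec v i = l i * c i := by
      rw [hsum, mul_add, Finset.mul_sum, ← hfoc i]
      congr 1
      rw [← hsum2]
      refine Finset.sum_congr rfl fun j _ => ?_
      have := hlne i
      field_simp
      try ring
    exact mul_left_cancel₀ (hlne i) key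
  constructor
  · intro i
    have : M⁻¹.mulVec c = v := by
      rw [← hMv, Matrix.mulVec_mulVec, Matrix.nonsing_inv_mul M hΛinv, Matrix.one_mulVec]
    rw [this]
  · intro hG
    rw [Matrix.mulVec_mulVec, Matrix.nonsing_inv_mul _ hG, Matrix.one_mulVec]
end
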